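/- arXiv:1205.0193 — 8 statements merged into one kernel-verified Lean document; each statement's English description precedes it below -/
import Mathlib

section
/- If Q₁, ..., Qₙ (n ≥ 2) are t-cyclic intervals (subsets of {1,...,t} of the form either [min{i₁,i₂}, max{i₁,i₂}] or its complement-closure {1,...,t} \ (min{i₁,i₂}, max{i₁,i₂}) for some i₁,i₂ ∈ {1,...,t}), and for every j ∈ {1,...,n−1} we have Qⱼ ∩ Qⱼ₊₁ ≠ ∅, then the union Q₁ ∪ ... ∪ Qₙ is a t-cyclic interval. -/
open SimpleGraph

/-- `Q` is a `t`-cyclic interval. -/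
def IsCyclicInterval (t : ℕ) (Q : Set ℕ) : Prop :=
  ∃ i₁ ∈ Set.Icc 1 t, ∃ i₂ ∈ Set.Icc 1 t,
    Q = Set.Icc (min i₁ i₂) (max i₁ i₂) ∨
    Q = Set.Icc 1 t \ (Set.Icc (min i₁ i₂) (max i₁ i₂) \ {i₁, i₂})

/-- A proper edge `t`-coloring: colors in `[1,t]`, adjacent edges differ, all colors used. -/
def IsProperEdgeColoring {V : Type*} (G : SimpleGraph V) (t : ℕ) (φ : Sym2 V → ℕ) : Prop :=
  (∀ e ∈ G.edgeSet, φ e ∈ Set.Icc 1 t) ∧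
  (∀ e₁ ∈ G.edgeSet, ∀ e₂ ∈ G.edgeSet, e₁ ≠ e₂ → (∃ x, x ∈ e₁ ∧ x ∈ e₂) → φ e₁ ≠ φ e₂) ∧
  (∀ c ∈ Set.Icc 1 t, ∃ e ∈ G.edgeSet, φ e = c)

/-- A cyclically-interval `t`-coloring. -/
def IsCyclicIntervalColoring {V : Type*} (G : SimpleGraph V) (t : ℕ) (φ : Sym2 V → ℕ) : Prop :=
  IsProperEdgeColoring G t φ ∧
  ∀ x : V, (G.incidenceSet x).Nonempty → IsCyclicInterval t (φ '' G.incidenceSet x)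

/-- An interval `t`-coloring. -/
def IsIntervalColoring {V : Type*} (G : SimpleGraph V) (t : ℕ) (φ : Sym2 V → ℕ) : Prop :=
  IsProperEdgeColoring G t φ ∧
  ∀ x : V, (G.incidenceSet x).Nonempty → ∃ a b, φ '' G.incidenceSet x = Set.Icc a b

/-- `TP(u,v)` along a path `p`. -/
def pathTP {V : Type*} (G : SimpleGraph V) {u v : V} (p : G.Walk u v) : Set (Sym2 V) :=
  if p.length ≤ 1 then {e | e ∈ p.edges}
  else ⋃ x ∈ {w | w ∈ p.support ∧ w ≠ u ∧ w ≠ v}, G.incidenceSet x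

/-- `M(H)`: maximum of `|TP(b_i,b_j)|` over pairs of vertices. -/
noncomputable def treeM {V : Type*} (G : SimpleGraph V) : ℕ :=
  sSup {n | ∃ (u v : V) (p : G.Walk u v), p.IsPath ∧ (pathTP G p).ncard = n}

noncomputable def Wcyc {V : Type*} (G : SimpleGraph V) : ℕ :=
  sSup {t | ∃ φ, IsCyclicIntervalColoring G t φ}

noncomputable def wcyc {V : Type*} (G : SimpleGraph V) : ℕ :=
  sInf {t | ∃ φ, IsCyclicIntervalColoring G t φ}

noncomputable def Wint {V : Type*} (G : SimpleGraph V) : ℕ :=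
  sSup {t | ∃ φ, IsIntervalColoring G t φ}

noncomputable def wint {V : Type*} (G : SimpleGraph V) : ℕ :=
  sInf {t | ∃ φ, IsIntervalColoring G t φ}

/-- Chromatic index: least `n` admitting a proper edge coloring with colors in `[1,n]`. -/
noncomputable def chromIndex {V : Type*} (G : SimpleGraph V) : ℕ :=
  sInf {n | ∃ φ : Sym2 V → ℕ, (∀ e ∈ G.edgeSet, φ e ∈ Set.Icc 1 n) ∧
    (∀ e₁ ∈ G.edgeSet, ∀ e₂ ∈ G.edgeSet, e₁ ≠ e₂ → (∃ x, x ∈ e₁ ∧ x ∈ e₂) → φ e₁ ≠ φ e₂)}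


/-- Cyclic distance from `a` to `x` (going forward around the cycle `1,…,t`). -/
def cdist (t a x : ℕ) : ℕ := if a ≤ x then x - a else x + t - a

/-- The arc of length `l` starting at `a`. -/
def Arc (t a l : ℕ) : Set ℕ := {x | (1 ≤ x ∧ x ≤ t) ∧ cdist t a x < l}

lemma cdist_lt {t a x : ℕ} (ha : 1 ≤ a ∧ a ≤ t) (hx : 1 ≤ x ∧ x ≤ t) :
    cdist t a x < t := by unfold cdist; split_ifs <;> omega

lemma cdist_rel {t a b x : ℕ} (ha : 1 ≤ a ∧ a ≤ t) (hb : 1 ≤ b ∧ b ≤ t)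
    (hx : 1 ≤ x ∧ x ≤ t) :
    cdist t a x = cdist t a b + cdist t b x ∨
    cdist t a x + t = cdist t a b + cdist t b x := by
  unfold cdist; split_ifs <;> omega

lemma isCyc_iff_arc (t : ℕ) (Q : Set ℕ) :
    IsCyclicInterval t Q ↔ ∃ a, (1 ≤ a ∧ a ≤ t) ∧ ∃ l, (1 ≤ l ∧ l ≤ t) ∧ Q = Arc t a l := by
  constructor
  · rintro ⟨i₁, hi₁, i₂, hi₂, h | h⟩
    · simp only [Set.mem_Icc] at hi₁ hi₂
      refine ⟨min i₁ i₂, by omega, max i₁ i₂ - min i₁ i₂ + 1, by omega, ?_⟩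
      subst h; ext x
      simp only [Arc, Set.mem_Icc, Set.mem_setOf_eq, cdist]
      split_ifs <;> omega
    · simp only [Set.mem_Icc] at hi₁ hi₂
      rcases eq_or_ne i₁ i₂ with he | he
      · refine ⟨1, by omega, t, by omega, ?_⟩
        subst h; ext x
        simp only [Arc, Set.mem_diff, Set.mem_Icc, Set.mem_setOf_eq, cdist,
          Set.mem_insert_iff, Set.mem_singleton_iff]
        split_ifs <;> omega
      · refine ⟨max i₁ i₂, by omega, t - max i₁ i₂ + min i₁ i₂ + 1, by omega, ?_⟩
        subst h; ext x
        simp only [Arc, Set.mem_diff, Set.mem_Icc, Set.mem_setOf_eq, cdist,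
          Set.mem_insert_iff, Set.mem_singleton_iff]
        split_ifs <;> omega
  · rintro ⟨a, ha, l, hl, rfl⟩
    rcases le_or_gt (a + l - 1) t with hc | hc
    · refine ⟨a, Set.mem_Icc.mpr (by omega), a + l - 1, Set.mem_Icc.mpr (by omega), Or.inl ?_⟩
      ext x
      simp only [Arc, Set.mem_Icc, Set.mem_setOf_eq, cdist]
      split_ifs <;> omega
    · refine ⟨a + l - 1 - t, Set.mem_Icc.mpr (by omega), a,
        Set.mem_Icc.mpr (by omega), Or.inr ?_⟩
      ext x
      simp only [Arc, Set.mem_diff, Set.mem_Icc, Set.mem_setOf_eq, cdist,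
        Set.mem_insert_iff, Set.mem_singleton_iff]
      split_ifs <;> omega

lemma arc_union_aux {t a b l m : ℕ} (ha : 1 ≤ a ∧ a ≤ t) (hb : 1 ≤ b ∧ b ≤ t)
    (hl : 1 ≤ l ∧ l ≤ t) (hm : 1 ≤ m ∧ m ≤ t) (hd : cdist t a b < l) :
    Arc t a l ∪ Arc t b m = Arc t a (min t (max l (cdist t a b + m))) := by
  ext x
  simp only [Arc, Set.mem_union, Set.mem_setOf_eq]
  by_cases hx : 1 ≤ x ∧ x ≤ t
  · have h1 := cdist_rel ha hb hx
    have h2 := cdist_lt ha hx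
    have h3 := cdist_lt hb hx
    omega
  · omega

lemma cyc_union {t : ℕ} {P R : Set ℕ} (hP : IsCyclicInterval t P)
    (hR : IsCyclicInterval t R) (h : (P ∩ R).Nonempty) : IsCyclicInterval t (P ∪ R) := by
  rw [isCyc_iff_arc] at hP hR ⊢
  obtain ⟨a, ha, l, hl, rfl⟩ := hP
  obtain ⟨b, hb, m, hm, rfl⟩ := hR
  obtain ⟨z, hz1, hz2⟩ := h
  simp only [Arc, Set.mem_setOf_eq] at hz1 hz2
  obtain ⟨hz, hza⟩ := hz1
  obtain ⟨-, hzb⟩ := hz2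
  have key : cdist t a b < l ∨ cdist t b a < m := by
    have h1 := cdist_rel ha hb hz
    have h3 : cdist t a b = 0 ∨ cdist t a b + cdist t b a = t := by
      unfold cdist; split_ifs <;> omega
    have h4 : cdist t a b = 0 → cdist t b a = 0 := by
      unfold cdist; split_ifs <;> omega
    omega
  rcases key with hd | hd
  · rw [arc_union_aux ha hb hl hm hd]
    exact ⟨a, ha, min t (max l (cdist t a b + m)), ⟨by omega, by omega⟩, rfl⟩
  · rw [Set.union_comm, arc_union_aux hb ha hm hl hd]
    exact ⟨b, hb, min t (max m (cdist t b a + l)), ⟨by omega, by omega⟩, rfl⟩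

lemma cyc_biUnion (t : ℕ) (Q : ℕ → Set ℕ) :
    ∀ n, 1 ≤ n → (∀ j ∈ Set.Icc 1 n, IsCyclicInterval t (Q j)) →
      (∀ j ∈ Set.Icc 1 (n - 1), (Q j ∩ Q (j + 1)).Nonempty) →
      IsCyclicInterval t (⋃ j ∈ Set.Icc 1 n, Q j) := by
  intro n
  induction n with
  | zero => intro h; omega
  | succ n ih =>
    intro _ hcyc hint
    rcases Nat.eq_zero_or_pos n with rfl | hn1
    · simpa using hcyc 1 (by simp)
    · have ih' := ih hn1 (fun j hj => hcyc j (by simp only [Set.mem_Icc] at hj ⊢; omega))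
        (fun j hj => hint j (by simp only [Set.mem_Icc] at hj ⊢; omega))
      have hsplit : (⋃ j ∈ Set.Icc 1 (n + 1), Q j) = (⋃ j ∈ Set.Icc 1 n, Q j) ∪ Q (n + 1) := by
        ext x
        simp only [Set.mem_iUnion, Set.mem_union, Set.mem_Icc, exists_prop]
        constructor
        · rintro ⟨j, hj, hx⟩
          rcases eq_or_lt_of_le hj.2 with h | h
          · exact Or.inr (h ▸ hx)
          · exact Or.inl ⟨j, ⟨hj.1, by omega⟩, hx⟩
        · rintro (⟨j, hj, hx⟩ | hx)
          · exact ⟨j, ⟨hj.1, by omega⟩, hx⟩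
          · exact ⟨n + 1, ⟨by omega, le_rfl⟩, hx⟩
      obtain ⟨z, hz1, hz2⟩ := hint n (by simp only [Set.mem_Icc]; omega)
      rw [hsplit]
      exact cyc_union ih' (hcyc (n + 1) (by simp only [Set.mem_Icc]; omega))
        ⟨z, Set.mem_biUnion (by simp only [Set.mem_Icc]; omega) hz1, hz2⟩


/-- Lemma 1: a union of pairwise consecutively intersecting `t`-cyclic intervals is a
`t`-cyclic interval. -/
theorem stmt0 (t n : ℕ) (hn : 2 ≤ n) (Q : ℕ → Set ℕ)
    (hcyc : ∀ j ∈ Set.Icc 1 n, IsCyclicInterval t (Q j))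
    (hint : ∀ j ∈ Set.Icc 1 (n - 1), (Q j ∩ Q (j + 1)).Nonempty) :
    IsCyclicInterval t (⋃ j ∈ Set.Icc 1 n, Q j) :=
  cyc_biUnion t Q n (by omega) hcyc hint
end

section
/- Let α be a cyclically-interval t-coloring of a graph G, and let P = (x₀, e₁, x₁, ..., x_{k−1}, e_k, x_k) be a simple path in G with k ≥ 2. Then the set of colors α[⋃_{i=1}^{k−1} J_G(x_i)] (the set of colors appearing on edges incident to the internal vertices of P) is a t-cyclic interval. -/
open SimpleGraph

lemma cycInterval_iff (t : ℕ) (Q : Set ℕ) :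
    IsCyclicInterval t Q ↔ ∃ a b, 1 ≤ a ∧ a ≤ b ∧ b ≤ t ∧
      (Q = Set.Icc a b ∨ Q = Set.Icc 1 t \ Set.Ioo a b) := by
  constructor
  · rintro ⟨i₁, hi₁, i₂, hi₂, h⟩
    simp only [Set.mem_Icc] at hi₁ hi₂
    refine ⟨min i₁ i₂, max i₁ i₂, by omega, by omega, by omega, ?_⟩
    rcases h with h | h
    · exact Or.inl h
    · refine Or.inr ?_
      rw [h]; ext n
      simp only [Set.mem_diff, Set.mem_Icc, Set.mem_Ioo, Set.mem_insert_iff,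
        Set.mem_singleton_iff]
      omega
  · rintro ⟨a, b, h1, h2, h3, h⟩
    refine ⟨a, by simp; omega, b, by simp; omega, ?_⟩
    rcases h with h | h
    · exact Or.inl (by rw [h, min_eq_left h2, max_eq_right h2])
    · refine Or.inr ?_
      rw [h]; ext n
      simp only [Set.mem_diff, Set.mem_Icc, Set.mem_Ioo, Set.mem_insert_iff,
        Set.mem_singleton_iff]
      omega

lemma arc_union (t : ℕ) (A B : Set ℕ) (hA : IsCyclicInterval t A)
    (hB : IsCyclicInterval t B) (hAB : (A ∩ B).Nonempty) :
    IsCyclicInterval t (A ∪ B) := by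
  rw [cycInterval_iff] at hA hB ⊢
  obtain ⟨a₁, a₂, ha1, ha12, ha2, hA⟩ := hA
  obtain ⟨b₁, b₂, hb1, hb12, hb2, hB⟩ := hB
  obtain ⟨m, hmA, hmB⟩ := hAB
  rcases hA with hA | hA <;> rcases hB with hB | hB <;>
    rw [hA] at hmA <;> rw [hB] at hmB <;>
    simp only [Set.mem_Icc, Set.mem_diff, Set.mem_Ioo] at hmA hmB
  · exact ⟨min a₁ b₁, max a₂ b₂, by omega, by omega, by omega, Or.inl (by
      rw [hA, hB]; ext n; simp only [Set.mem_union, Set.mem_Icc]; omega)⟩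
  · by_cases h1 : a₁ ≤ b₁ + 1 <;> by_cases h2 : b₂ ≤ a₂ + 1
    · exact ⟨1, t, le_refl 1, by omega, le_refl t, Or.inl (by
        rw [hA, hB]; ext n
        simp only [Set.mem_union, Set.mem_Icc, Set.mem_diff, Set.mem_Ioo]; omega)⟩
    · exact ⟨max a₂ b₁, b₂, by omega, by omega, by omega, Or.inr (by
        rw [hA, hB]; ext n
        simp only [Set.mem_union, Set.mem_Icc, Set.mem_diff, Set.mem_Ioo]; omega)⟩
    · exact ⟨b₁, min a₁ b₂, by omega, by omega, by omega, Or.inr (by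
        rw [hA, hB]; ext n
        simp only [Set.mem_union, Set.mem_Icc, Set.mem_diff, Set.mem_Ioo]; omega)⟩
    · exact absurd rfl (by omega : m ≠ m)
  · by_cases h1 : b₁ ≤ a₁ + 1 <;> by_cases h2 : a₂ ≤ b₂ + 1
    · exact ⟨1, t, le_refl 1, by omega, le_refl t, Or.inl (by
        rw [hA, hB]; ext n
        simp only [Set.mem_union, Set.mem_Icc, Set.mem_diff, Set.mem_Ioo]; omega)⟩
    · exact ⟨max b₂ a₁, a₂, by omega, by omega, by omega, Or.inr (by
        rw [hA, hB]; ext n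
        simp only [Set.mem_union, Set.mem_Icc, Set.mem_diff, Set.mem_Ioo]; omega)⟩
    · exact ⟨a₁, min b₁ a₂, by omega, by omega, by omega, Or.inr (by
        rw [hA, hB]; ext n
        simp only [Set.mem_union, Set.mem_Icc, Set.mem_diff, Set.mem_Ioo]; omega)⟩
    · exact absurd rfl (by omega : m ≠ m)
  · by_cases h : max a₁ b₁ ≤ min a₂ b₂
    · exact ⟨max a₁ b₁, min a₂ b₂, by omega, h, by omega, Or.inr (by
        rw [hA, hB]; ext n
        simp only [Set.mem_union, Set.mem_Icc, Set.mem_diff, Set.mem_Ioo]; omega)⟩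
    · exact ⟨1, t, le_refl 1, by omega, le_refl t, Or.inl (by
        rw [hA, hB]; ext n
        simp only [Set.mem_union, Set.mem_Icc, Set.mem_diff, Set.mem_Ioo]; omega)⟩

lemma path_start_ne_end {V : Type*} {G : SimpleGraph V} {u v : V} (q : G.Walk u v)
    (hq : q.IsPath) (h : 1 ≤ q.length) : u ≠ v := by
  rintro rfl
  rw [SimpleGraph.Walk.isPath_iff_eq_nil] at hq
  subst hq
  simp at h

lemma stmt1_aux {V : Type*} (G : SimpleGraph V) (t : ℕ) (φ : Sym2 V → ℕ)
    (hφ : IsCyclicIntervalColoring G t φ) {u v : V} (p : G.Walk u v) :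
    p.IsPath → 2 ≤ p.length →
    IsCyclicInterval t (φ '' ⋃ x ∈ {w | w ∈ p.support ∧ w ≠ u ∧ w ≠ v}, G.incidenceSet x) := by
  induction p with
  | nil => intro _ hk; simp at hk
  | @cons u x v h q ih =>
    intro hp hk
    rw [SimpleGraph.Walk.cons_isPath_iff] at hp
    obtain ⟨hq, hu⟩ := hp
    have hxv : x ≠ v := path_start_ne_end q hq (by simp [Walk.length_cons] at hk; omega)
    have hux : u ≠ x := fun e => hu (e ▸ q.start_mem_support)
    rcases Nat.lt_or_ge q.length 2 with hlen | hlen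
    · -- base case: q.length = 1
      clear ih
      have hql : q.length = 1 := by simp [Walk.length_cons] at hk; omega
      have hsup : q.support = [x, v] := by
        cases q with
        | nil => simp at hql
        | cons h' q' =>
          cases q' with
          | nil => simp
          | cons h'' q'' => simp [Walk.length_cons] at hql
      have hset : {w | w ∈ (Walk.cons h q).support ∧ w ≠ u ∧ w ≠ v} = ({x} : Set V) := by
        ext w
        simp only [Set.mem_setOf_eq, Walk.support_cons, List.mem_cons, hsup,
          Set.mem_singleton_iff, List.mem_singleton]
        constructor
        · rintro ⟨(rfl | rfl | (rfl | h0)), h1, h2⟩ <;> first | rfl | simp_all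
        · rintro rfl; exact ⟨Or.inr (Or.inl rfl), fun e => hux e.symm, hxv⟩
      rw [hset, Set.biUnion_singleton]
      exact hφ.2 x ⟨s(u, x), G.mk'_mem_incidenceSet_right_iff.2 h⟩
    · have IH := ih hq hlen
      clear ih
      have hset : {w | w ∈ (Walk.cons h q).support ∧ w ≠ u ∧ w ≠ v}
          = insert x {w | w ∈ q.support ∧ w ≠ x ∧ w ≠ v} := by
        ext w
        simp only [Set.mem_setOf_eq, Walk.support_cons, List.mem_cons, Set.mem_insert_iff]
        constructor
        · rintro ⟨(rfl | hw), h1, h2⟩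
          · exact absurd rfl h1
          · by_cases hwx : w = x
            · exact Or.inl hwx
            · exact Or.inr ⟨hw, hwx, h2⟩
        · rintro (rfl | ⟨hw, h1, h2⟩)
          · exact ⟨Or.inr q.start_mem_support, fun e => hux e.symm, hxv⟩
          · exact ⟨Or.inr hw, fun e => hu (e ▸ hw), h2⟩
      rw [hset, Set.biUnion_insert, Set.image_union]
      apply arc_union t _ _ (hφ.2 x ⟨s(u, x), G.mk'_mem_incidenceSet_right_iff.2 h⟩) IH
      -- intersection witness: the first edge of q
      cases q with
      | nil => simp at hlen
      | @cons x y v h' q' =>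
        have hyv : y ≠ v := path_start_ne_end q' ((Walk.cons_isPath_iff _ _).1 hq).1
          (by simp [Walk.length_cons] at hlen; omega)
        refine ⟨φ s(x, y), ⟨s(x, y), G.mk'_mem_incidenceSet_left_iff.2 h', rfl⟩, ?_⟩
        refine ⟨s(x, y), ?_, rfl⟩
        refine Set.mem_biUnion ?_ (G.mk'_mem_incidenceSet_right_iff.2 h')
        exact ⟨by simp, h'.ne', hyv⟩

/-- Lemma 2: the colors on edges incident to internal vertices of a simple path form a
`t`-cyclic interval. -/
theorem stmt1 {V : Type*} (G : SimpleGraph V) (t : ℕ) (φ : Sym2 V → ℕ)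
    (hφ : IsCyclicIntervalColoring G t φ) {x₀ xₖ : V} (p : G.Walk x₀ xₖ)
    (hp : p.IsPath) (hk : 2 ≤ p.length) :
    IsCyclicInterval t (φ '' ⋃ x ∈ {w | w ∈ p.support ∧ w ≠ x₀ ∧ w ≠ xₖ}, G.incidenceSet x) := by
  exact stmt1_aux G t φ hφ p hp hk
end

section
/- Let α be a cyclically-interval t-coloring of a graph G, and let P = (x₀, e₁, x₁, ..., x_{k−1}, e_k, x_k) be a simple path with k ≥ 2. Then at least one of the two open cyclic arcs between α(e₁) and α(e_k) is entirely contained in α[⋃_{i=1}^{k−1} J_G(x_i)]; i.e., either intcyc₁((α(e₁), α(e_k)), t) ⊆ α[⋃_{i=1}^{k−1} J_G(x_i)] or intcyc₂((α(e₁), α(e_k)), t) ⊆ α[⋃_{i=1}^{k−1} J_G(x_i)]. -/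
/-!
Suppose some colour `u` of the open arc `(φ e₁, φ eₖ)` and some colour `v` outside the closed
arc `[φ e₁, φ eₖ]` are both missing at every internal vertex. The colours at an internal vertex
form a cyclic interval avoiding `u` and `v`, so they lie either all strictly between `u` and `v`
or all outside. Consecutive edges of the path meet in an internal vertex, hence `φ e₁` and `φ eₖ`
lie on the same side of `{u, v}`; yet exactly one of them lies strictly between `u` and `v`.
-/

open SimpleGraph

theorem IsCyclicInterval.mem_uIoo_iff {t : ℕ} {Q : Set ℕ} (hQ : IsCyclicInterval t Q)
    {u v a b : ℕ} (hu : u ∈ Set.Icc 1 t) (hv : v ∈ Set.Icc 1 t) (huQ : u ∉ Q) (hvQ : v ∉ Q)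
    (ha : a ∈ Q) (hb : b ∈ Q) : a ∈ Set.uIoo u v ↔ b ∈ Set.uIoo u v := by
  obtain ⟨i₁, hi₁, i₂, hi₂, rfl | rfl⟩ := hQ <;>
    simp only [Set.uIoo, Set.mem_Ioo, Set.mem_Icc, Set.mem_sdiff, Set.mem_insert_iff,
      Set.mem_singleton_iff, not_and, not_or, not_not, not_le] at * <;> omega

theorem SimpleGraph.Walk.IsPath.iff_of_head?_of_getLast? {V : Type*} {G : SimpleGraph V}
    (P : Sym2 V → Prop) {x y : V} {p : G.Walk x y} (hp : p.IsPath)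
    (hP : ∀ w ∈ p.support, w ≠ x → w ≠ y →
      ∀ e ∈ G.incidenceSet w, ∀ e' ∈ G.incidenceSet w, (P e ↔ P e'))
    {e f : Sym2 V} (he : p.edges.head? = some e) (hf : p.edges.getLast? = some f) :
    P e ↔ P f := by
  induction p generalizing e with
  | nil => simp at he
  | @cons x x₁ y h q ih =>
    cases q with
    | nil =>
      simp only [edges_cons, edges_nil, List.head?_cons, List.getLast?_singleton,
        Option.some.injEq] at he hf
      rw [← he, ← hf]
    | @cons _ x₂ _ h' r =>
      simp only [edges_cons, List.head?_cons, Option.some.injEq] at he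
      subst he
      obtain ⟨hq, hx⟩ := (cons_isPath_iff _ _).1 hp
      have hx₁y : x₁ ≠ y := by
        rintro rfl
        exact (List.nodup_cons.1 (support_cons h' r ▸ hq.support_nodup)).1 r.end_mem_support
      have hx₁ : x₁ ∈ (cons h (cons h' r)).support := by simp
      have hstep := hP x₁ hx₁ h.ne' hx₁y _ ⟨h, Sym2.mem_mk_right x x₁⟩ _
        ⟨h', Sym2.mem_mk_left x₁ x₂⟩
      refine hstep.trans (ih hq (fun w hw hwx₁ hwy => ?_) (by simp) ?_)
      · exact hP w (List.mem_cons_of_mem _ hw) (by rintro rfl; exact hx hw) hwy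
      · simpa only [edges_cons, List.getLast?_cons_cons] using hf

theorem stmt2_general {V : Type*} (G : SimpleGraph V) (t : ℕ) (φ : Sym2 V → ℕ)
    (hφ : IsCyclicIntervalColoring G t φ) {x₀ xₖ : V} (p : G.Walk x₀ xₖ)
    (hp : p.IsPath) (e₁ eₖ : Sym2 V)
    (he₁ : p.edges.head? = some e₁) (heₖ : p.edges.getLast? = some eₖ) :
    Set.Icc (min (φ e₁) (φ eₖ)) (max (φ e₁) (φ eₖ)) \ {φ e₁, φ eₖ} ⊆
      φ '' ⋃ x ∈ {w | w ∈ p.support ∧ w ≠ x₀ ∧ w ≠ xₖ}, G.incidenceSet x ∨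
    Set.Icc 1 t \ Set.Icc (min (φ e₁) (φ eₖ)) (max (φ e₁) (φ eₖ)) ⊆
      φ '' ⋃ x ∈ {w | w ∈ p.support ∧ w ≠ x₀ ∧ w ≠ xₖ}, G.incidenceSet x := by
  set S := φ '' ⋃ x ∈ {w | w ∈ p.support ∧ w ≠ x₀ ∧ w ≠ xₖ}, G.incidenceSet x
  refine or_iff_not_imp_left.2 fun hnot v hv => by_contra fun hvS => ?_
  obtain ⟨u, hu, huS⟩ := Set.not_subset.1 hnot
  have hc₁ := hφ.1.1 e₁ (p.edges_subset_edgeSet (List.mem_of_mem_head? he₁))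
  have hcₖ := hφ.1.1 eₖ (p.edges_subset_edgeSet (List.mem_of_mem_getLast? heₖ))
  have hut : u ∈ Set.Icc 1 t := by
    simp only [Set.mem_sdiff, Set.mem_Icc, Set.mem_insert_iff, Set.mem_singleton_iff,
      not_or] at hu hc₁ hcₖ ⊢
    omega
  have hstar : ∀ w ∈ p.support, w ≠ x₀ → w ≠ xₖ → ∀ e ∈ G.incidenceSet w,
      ∀ e' ∈ G.incidenceSet w, (φ e ∈ Set.uIoo u v ↔ φ e' ∈ Set.uIoo u v) := by
    intro w hw hw₀ hwₖ e he e' he'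
    have hsub : φ '' G.incidenceSet w ⊆ S :=
      Set.image_mono (Set.subset_biUnion_of_mem (u := G.incidenceSet) ⟨hw, hw₀, hwₖ⟩)
    exact (hφ.2 w ⟨e, he⟩).mem_uIoo_iff hut hv.1 (fun h => huS (hsub h))
      (fun h => hvS (hsub h)) (Set.mem_image_of_mem φ he) (Set.mem_image_of_mem φ he')
  have hside := hp.iff_of_head?_of_getLast? (fun e => φ e ∈ Set.uIoo u v) hstar he₁ heₖ
  simp only [Set.uIoo, Set.mem_sdiff, Set.mem_Ioo, Set.mem_Icc, Set.mem_insert_iff,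
    Set.mem_singleton_iff, not_or, not_and, not_le] at hu hv hc₁ hcₖ hside
  omega

/-- Lemma 3: at least one of the two open cyclic arcs between the colors of the first and last
edge of a simple path is contained in the colors incident to its internal vertices. -/
theorem stmt2 {V : Type*} (G : SimpleGraph V) (t : ℕ) (φ : Sym2 V → ℕ)
    (hφ : IsCyclicIntervalColoring G t φ) {x₀ xₖ : V} (p : G.Walk x₀ xₖ)
    (hp : p.IsPath) (hk : 2 ≤ p.length) (e₁ eₖ : Sym2 V)
    (he₁ : p.edges.head? = some e₁) (heₖ : p.edges.getLast? = some eₖ) :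
    Set.Icc (min (φ e₁) (φ eₖ)) (max (φ e₁) (φ eₖ)) \ {φ e₁, φ eₖ} ⊆
      φ '' ⋃ x ∈ {w | w ∈ p.support ∧ w ≠ x₀ ∧ w ≠ xₖ}, G.incidenceSet x ∨
    Set.Icc 1 t \ Set.Icc (min (φ e₁) (φ eₖ)) (max (φ e₁) (φ eₖ)) ⊆
      φ '' ⋃ x ∈ {w | w ∈ p.support ∧ w ≠ x₀ ∧ w ≠ xₖ}, G.incidenceSet x :=
  stmt2_general G t φ hφ p hp e₁ eₖ he₁ heₖ
end

section
/- If α is a cyclically-interval t-coloring of a tree H, then there exist vertices b′, b″ ∈ V(H) such that α[TP(b′,b″)] = {1,...,t}, i.e., the edges in TP(b′,b″) together receive all t colors. -/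
open SimpleGraph

/-!
Palettes of vertices are cyclic arcs of colors, and the palettes of adjacent vertices share the
color of their edge. Hence the colors seen along a path ending at `v`, read on the circle cut at
a color of `v`, form a star-shaped set. A path whose vertices see the most colors sees all of
them: otherwise, joining a vertex with a missing color to the path and rerouting through it, one
of the two branches at the junction can be replaced by the detour, which gains a color. A longest
such path ends in leaves, whose only colors are also seen at their neighbours, so the internal
vertices alone see all colors.
-/

/-- The position of the color `x` on the circle `1 → 2 → ⋯ → t → 1`, counted from `a`. -/
def cycDist (t a x : ℕ) : ℕ := if a ≤ x then x - a else x + t - a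

def cycArc (t a b : ℕ) : Set ℕ := {x | x ∈ Set.Icc 1 t ∧ cycDist t a x ≤ cycDist t a b}

/-- Cutting the circle at `a` turns it into the line of positions `cycDist t a`; `S` is star-shaped
if with each of its points it contains everything below it or everything above it on that line. -/
def IsCycStar (t a : ℕ) (S : Set ℕ) : Prop :=
  ∀ x ∈ S, (∀ z ∈ Set.Icc 1 t, cycDist t a z ≤ cycDist t a x → z ∈ S) ∨
    (∀ z ∈ Set.Icc 1 t, cycDist t a x ≤ cycDist t a z → z ∈ S)

section Cyclic

variable {t a i j : ℕ}

theorem mem_cycArc_iff (ha : a ∈ Set.Icc 1 t) (hi : i ∈ Set.Icc 1 t) (hj : j ∈ Set.Icc 1 t)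
    {z : ℕ} : z ∈ cycArc t i j ↔ z ∈ Set.Icc 1 t ∧
      (cycDist t a i ≤ cycDist t a z ∧ cycDist t a z ≤ cycDist t a j ∨
        cycDist t a j < cycDist t a i ∧
          (cycDist t a i ≤ cycDist t a z ∨ cycDist t a z ≤ cycDist t a j)) := by
  simp only [cycArc, Set.mem_ofPred_eq, Set.mem_Icc, cycDist] at *
  split_ifs <;> omega

theorem IsCyclicInterval.exists_eq_cycArc {Q : Set ℕ} (hQ : IsCyclicInterval t Q) :
    ∃ i ∈ Set.Icc 1 t, ∃ j ∈ Set.Icc 1 t, Q = cycArc t i j := by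
  obtain ⟨i₁, hi₁, i₂, hi₂, rfl | rfl⟩ := hQ <;> rw [Set.mem_Icc] at hi₁ hi₂
  · refine ⟨min i₁ i₂, by grind, max i₁ i₂, by grind, ?_⟩
    ext x
    simp only [cycArc, Set.mem_ofPred_eq, Set.mem_Icc, cycDist]
    split_ifs <;> omega
  · rcases eq_or_ne i₁ i₂ with rfl | hne
    · refine ⟨1, by grind, t, by grind, ?_⟩
      ext x
      simp only [cycArc, Set.mem_ofPred_eq, Set.mem_Icc, Set.mem_sdiff, Set.mem_insert_iff,
        Set.mem_singleton_iff, cycDist]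
      split_ifs <;> omega
    · refine ⟨max i₁ i₂, by grind, min i₁ i₂, by grind, ?_⟩
      ext x
      simp only [cycArc, Set.mem_ofPred_eq, Set.mem_Icc, Set.mem_sdiff, Set.mem_insert_iff,
        Set.mem_singleton_iff, cycDist]
      split_ifs <;> omega

theorem isCycStar_cycArc (ha : a ∈ Set.Icc 1 t) (hi : i ∈ Set.Icc 1 t) (hj : j ∈ Set.Icc 1 t)
    (haB : a ∈ cycArc t i j) : IsCycStar t a (cycArc t i j) := by
  have hpa : cycDist t a a = 0 := by simp [cycDist]
  intro x hx
  rw [mem_cycArc_iff ha hi hj] at haB hx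
  by_cases hxj : cycDist t a x ≤ cycDist t a j
  · exact Or.inl fun z hz hzx => (mem_cycArc_iff ha hi hj).2 ⟨hz, by omega⟩
  · exact Or.inr fun z hz hzx => (mem_cycArc_iff ha hi hj).2 ⟨hz, by omega⟩

namespace IsCycStar

variable {S : Set ℕ}

theorem union_cycArc (hS : IsCycStar t a S) (ha : a ∈ Set.Icc 1 t) (hi : i ∈ Set.Icc 1 t)
    (hj : j ∈ Set.Icc 1 t) {y : ℕ} (hyS : y ∈ S) (hyB : y ∈ cycArc t i j) :
    IsCycStar t a (S ∪ cycArc t i j) := by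
  rintro x (hx | hx)
  · exact (hS x hx).imp (fun h z hz hzx => .inl (h z hz hzx)) (fun h z hz hzx => .inl (h z hz hzx))
  rw [mem_cycArc_iff ha hi hj] at hx hyB
  simp only [Set.mem_union, mem_cycArc_iff ha hi hj]
  rcases hS y hyS with hdown | hup
  · by_cases hleft : cycDist t a x ≤ cycDist t a y ∨ cycDist t a i ≤ cycDist t a j ∨
        cycDist t a x ≤ cycDist t a j
    · refine .inl fun z hz hzx => ?_
      by_cases hzy : cycDist t a z ≤ cycDist t a y
      · exact .inl (hdown z hz hzy)
      · exact .inr ⟨hz, by omega⟩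
    · exact .inr fun z hz hzx => .inr ⟨hz, by omega⟩
  · by_cases hright : cycDist t a y ≤ cycDist t a x ∨ cycDist t a i ≤ cycDist t a j ∨
        cycDist t a i ≤ cycDist t a x
    · refine .inr fun z hz hzx => ?_
      by_cases hzy : cycDist t a y ≤ cycDist t a z
      · exact .inl (hup z hz hzy)
      · exact .inr ⟨hz, by omega⟩
    · exact .inl fun z hz hzx => .inr ⟨hz, by omega⟩

/-- `T` contains `c` and everything on one side of it, so witnesses of `R ⊈ L ∪ T` and
`L ⊈ R ∪ T` lie on the other side; there `R` and `L` extend away from `c` from their witnesses,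
and the one whose witness is nearer to `c` contains the other witness. -/
theorem subset_union_or_subset_union {L R T : Set ℕ} (hL : IsCycStar t a L)
    (hR : IsCycStar t a R) (hT : IsCycStar t a T) (hLt : L ⊆ Set.Icc 1 t) (hRt : R ⊆ Set.Icc 1 t)
    {c : ℕ} (hct : c ∈ Set.Icc 1 t) (hcT : c ∈ T) (hcL : c ∉ L) (hcR : c ∉ R) :
    R ⊆ L ∪ T ∨ L ⊆ R ∪ T := by
  by_contra! h
  obtain ⟨⟨r, hrR, hr⟩, ⟨l, hlL, hl⟩⟩ := And.imp Set.not_subset.1 Set.not_subset.1 h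
  simp only [Set.mem_union, not_or] at hr hl
  rcases hT c hcT with hT' | hT' <;> rcases hR r hrR with hR' | hR' <;>
    rcases hL l hlL with hL' | hL' <;>
  · have := mt (hT' r (hRt hrR)) hr.2
    have := mt (hT' l (hLt hlL)) hl.2
    have := mt (hR' c hct) hcR
    have := mt (hR' l (hLt hlL)) hl.1
    have := mt (hL' c hct) hcL
    have := mt (hL' r (hRt hrR)) hr.1
    omega

end IsCycStar

end Cyclic

theorem SimpleGraph.exists_adj_eq_of_mem_incidenceSet {V : Type*} {H : SimpleGraph V} {v : V}
    {e : Sym2 V} (he : e ∈ H.incidenceSet v) : ∃ w, H.Adj v w ∧ e = s(v, w) := by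
  refine ⟨Sym2.Mem.other he.2, ?_, (Sym2.other_spec he.2).symm⟩
  rw [← H.mem_edgeSet, Sym2.other_spec he.2]
  exact he.1

theorem SimpleGraph.Walk.IsPath.append_of_support_inter {V : Type*} {H : SimpleGraph V}
    {u v w : V} {p : H.Walk u v} {q : H.Walk v w} (hp : p.IsPath) (hq : q.IsPath)
    (hpq : ∀ x ∈ p.support, x ∈ q.support → x = v) : (p.append q).IsPath := by
  have hq' := hq.support_nodup
  rw [← q.cons_tail_support, List.nodup_cons] at hq'
  rw [Walk.isPath_def, Walk.support_append, List.nodup_append]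
  refine ⟨hp.support_nodup, hq'.2, fun x hx y hy hxy => ?_⟩
  subst hxy
  have : x = v := hpq x hx (q.cons_tail_support ▸ List.mem_cons_of_mem _ hy)
  exact hq'.1 (this ▸ hy)

theorem SimpleGraph.Walk.exists_walk_support_inter_eq {V : Type*} {H : SimpleGraph V} (S : Set V) :
    ∀ {z u : V}, H.Walk z u → u ∈ S →
      ∃ v ∈ S, ∃ r : H.Walk z v, ∀ x ∈ r.support, x ∈ S → x = v
  | _, _, .nil, hu => ⟨_, hu, .nil, by simp⟩
  | z, _, .cons h q, hu => by
    by_cases hz : z ∈ S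
    · exact ⟨z, hz, .nil, by simp⟩
    · obtain ⟨v, hv, r, hr⟩ := exists_walk_support_inter_eq S q hu
      refine ⟨v, hv, .cons h r, ?_⟩
      rintro x (_ | ⟨_, hx⟩) hxS
      · exact absurd hxS hz
      · exact hr x hx hxS

theorem SimpleGraph.Walk.IsPath.snd_ne_end {V : Type*} {H : SimpleGraph V} {u w : V}
    {p : H.Walk u w} (hp : p.IsPath) (hlen : 2 ≤ p.length) : p.snd ≠ w := by
  cases p with
  | nil => simp at hlen
  | cons h q =>
    intro hw
    simp only [Walk.snd_cons] at hw
    subst hw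
    rw [Walk.cons_isPath_iff, Walk.isPath_iff_nil, ← Walk.length_eq_zero_iff] at hp
    simp [hp.1] at hlen

def palette {V : Type*} (H : SimpleGraph V) (φ : Sym2 V → ℕ) (x : V) : Set ℕ :=
  φ '' H.incidenceSet x

def walkPalette {V : Type*} (H : SimpleGraph V) (φ : Sym2 V → ℕ) {u v : V} (q : H.Walk u v) :
    Set ℕ :=
  ⋃ x ∈ q.support, palette H φ x

section Palette

variable {V : Type*} {H : SimpleGraph V} {t : ℕ} {φ : Sym2 V → ℕ} {u v w x y : V}

theorem mem_palette_left (h : H.Adj x y) : φ s(x, y) ∈ palette H φ x :=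
  ⟨_, H.mk'_mem_incidenceSet_left_iff.2 h, rfl⟩

theorem mem_palette_right (h : H.Adj x y) : φ s(x, y) ∈ palette H φ y :=
  ⟨_, H.mk'_mem_incidenceSet_right_iff.2 h, rfl⟩

theorem palette_subset_walkPalette (q : H.Walk u v) (hx : x ∈ q.support) :
    palette H φ x ⊆ walkPalette H φ q :=
  Set.subset_biUnion_of_mem (u := fun x => palette H φ x) hx

@[simp]
theorem walkPalette_nil : walkPalette H φ (Walk.nil : H.Walk v v) = palette H φ v := by
  simp [walkPalette]

@[simp]
theorem walkPalette_cons (h : H.Adj u v) (q : H.Walk v w) :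
    walkPalette H φ (.cons h q) = palette H φ u ∪ walkPalette H φ q := by
  simp [walkPalette]

@[simp]
theorem walkPalette_append (p : H.Walk u v) (q : H.Walk v w) :
    walkPalette H φ (p.append q) = walkPalette H φ p ∪ walkPalette H φ q := by
  simp [walkPalette, Set.iUnion_or, Set.iUnion_union_distrib]

@[simp]
theorem walkPalette_reverse (p : H.Walk u v) : walkPalette H φ p.reverse = walkPalette H φ p := by
  simp [walkPalette]

theorem IsProperEdgeColoring.palette_subset (hφ : IsProperEdgeColoring H t φ) (x : V) :
    palette H φ x ⊆ Set.Icc 1 t := by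
  rintro _ ⟨e, he, rfl⟩
  exact hφ.1 e he.1

theorem IsProperEdgeColoring.walkPalette_subset (hφ : IsProperEdgeColoring H t φ)
    (q : H.Walk u v) : walkPalette H φ q ⊆ Set.Icc 1 t :=
  Set.iUnion₂_subset fun x _ => hφ.palette_subset x

theorem IsCyclicIntervalColoring.exists_palette_eq_cycArc (hφ : IsCyclicIntervalColoring H t φ)
    (h : H.Adj x y) : ∃ i ∈ Set.Icc 1 t, ∃ j ∈ Set.Icc 1 t, palette H φ x = cycArc t i j :=
  (hφ.2 x ⟨_, H.mk'_mem_incidenceSet_left_iff.2 h⟩).exists_eq_cycArc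

theorem IsCyclicIntervalColoring.isCycStar_walkPalette (hφ : IsCyclicIntervalColoring H t φ)
    {a : ℕ} (q : H.Walk u v) (ha : a ∈ palette H φ v) : IsCycStar t a (walkPalette H φ q) := by
  have hat := hφ.1.palette_subset v ha
  induction q with
  | nil =>
    obtain ⟨e, he, rfl⟩ := ha
    obtain ⟨w, hw, rfl⟩ := exists_adj_eq_of_mem_incidenceSet he
    obtain ⟨i, hi, j, hj, hij⟩ := hφ.exists_palette_eq_cycArc hw
    rw [walkPalette_nil, hij]
    exact isCycStar_cycArc hat hi hj (hij ▸ mem_palette_left hw)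
  | cons h q ih =>
    obtain ⟨i, hi, j, hj, hij⟩ := hφ.exists_palette_eq_cycArc h
    rw [walkPalette_cons, Set.union_comm, hij]
    exact (ih ha).union_cycArc hat hi hj
      (palette_subset_walkPalette q q.start_mem_support (mem_palette_right h))
      (hij ▸ mem_palette_left h)

end Palette

section Covering

variable {V : Type*} {H : SimpleGraph V} {t : ℕ} {φ : Sym2 V → ℕ}

theorem IsCyclicIntervalColoring.exists_walkPalette_ssubset (hφ : IsCyclicIntervalColoring H t φ)
    (hH : H.Connected) {u w z : V} {P : H.Walk u w} (hP : P.IsPath) {c : ℕ}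
    (hcz : c ∈ palette H φ z) (hcP : c ∉ walkPalette H φ P) :
    ∃ (x y : V) (Q : H.Walk x y), Q.IsPath ∧ walkPalette H φ P ⊂ walkPalette H φ Q := by
  classical
  obtain ⟨v, hv, r₀, hr₀⟩ := (hH.preconnected z u).some.exists_walk_support_inter_eq
    {x | x ∈ P.support} P.start_mem_support
  have hvP : v ∈ P.support := hv
  set r := r₀.bypass
  have hr_inter : ∀ x ∈ r.support, x ∈ P.support → x = v :=
    fun x hx => hr₀ x (r₀.support_bypass_subset_support hx)
  obtain ⟨e, he, rfl⟩ := hcz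
  obtain ⟨z', hzz', -⟩ := exists_adj_eq_of_mem_incidenceSet he
  have : Nontrivial V := ⟨z, z', hzz'.ne⟩
  obtain ⟨v', hvv'⟩ : ∃ v', H.Adj v v' := hH.preconnected.exists_adj_of_nontrivial v
  set L := P.takeUntil v hvP
  set R := P.dropUntil v hvP
  have hLR : walkPalette H φ P = walkPalette H φ L ∪ walkPalette H φ R := by
    rw [← walkPalette_append, P.take_spec hvP]
  have hcr : φ e ∈ walkPalette H φ r :=
    palette_subset_walkPalette r r.start_mem_support ⟨e, he, rfl⟩
  have ha := mem_palette_left (φ := φ) hvv'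
  have hR := hφ.isCycStar_walkPalette R.reverse ha
  rw [walkPalette_reverse] at hR
  rw [hLR, Set.mem_union, not_or] at hcP
  rcases (hφ.isCycStar_walkPalette L ha).subset_union_or_subset_union hR
    (hφ.isCycStar_walkPalette r ha) (hφ.1.walkPalette_subset L) (hφ.1.walkPalette_subset R)
    (hφ.1.walkPalette_subset r hcr) hcr hcP.1 hcP.2 with hRsub | hLsub
  · refine ⟨u, z, L.append r.reverse, (hP.takeUntil hvP).append_of_support_inter
      r₀.bypass_isPath.reverse fun x hxL hxr => ?_, ?_⟩
    · exact hr_inter x (by simpa using hxr) (P.support_takeUntil_subset_support hvP hxL)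
    · rw [walkPalette_append, walkPalette_reverse, hLR]
      exact (Set.ssubset_iff_of_subset (Set.union_subset Set.subset_union_left hRsub)).2
        ⟨_, .inr hcr, fun h => h.elim hcP.1 hcP.2⟩
  · refine ⟨z, w, r.append R, r₀.bypass_isPath.append_of_support_inter (hP.dropUntil hvP)
      fun x hxr hxR => hr_inter x hxr (P.support_dropUntil_subset_support hvP hxR), ?_⟩
    rw [walkPalette_append, hLR, Set.union_comm (walkPalette H φ r)]
    exact (Set.ssubset_iff_of_subset (Set.union_subset hLsub Set.subset_union_left)).2
      ⟨_, .inr hcr, fun h => h.elim hcP.1 hcP.2⟩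

theorem IsCyclicIntervalColoring.exists_isPath_Icc_subset_walkPalette [Finite V]
    (hφ : IsCyclicIntervalColoring H t φ) (hH : H.Connected) :
    ∃ (u w : V) (P : H.Walk u w), P.IsPath ∧ Set.Icc 1 t ⊆ walkPalette H φ P := by
  classical
  cases nonempty_fintype V
  have : Nonempty (Σ u w, H.Path u w) := hH.nonempty.elim fun x => ⟨⟨x, x, Path.nil⟩⟩
  obtain ⟨⟨u, w, P, hP⟩, hmax⟩ :=
    Finite.exists_max fun p : Σ u w, H.Path u w => (walkPalette H φ p.2.2.1).ncard
  refine ⟨u, w, P, hP, fun c hc => ?_⟩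
  by_contra hcP
  obtain ⟨e, he, rfl⟩ := hφ.1.2.2 c hc
  obtain ⟨x, y, Q, hQ, hPQ⟩ := hφ.exists_walkPalette_ssubset hH hP
    ⟨e, ⟨he, Sym2.out_fst_mem e⟩, rfl⟩ hcP
  exact (hmax ⟨x, y, Q, hQ⟩).not_gt <|
    Set.ncard_lt_ncard hPQ ((Set.finite_Icc 1 t).subset (hφ.1.walkPalette_subset Q))

theorem exists_isPath_subset_walkPalette_adj_eq [Finite V] (hH : H.IsAcyclic) {S : Set ℕ}
    {u w : V} {P : H.Walk u w} (hP : P.IsPath) (hS : S ⊆ walkPalette H φ P) :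
    ∃ (u w : V) (P : H.Walk u w), P.IsPath ∧ S ⊆ walkPalette H φ P ∧
      (∀ y, H.Adj u y → y = P.snd) ∧ (∀ y, H.Adj w y → y = P.penultimate) := by
  classical
  cases nonempty_fintype V
  have : Nonempty {p : Σ u w, H.Path u w // S ⊆ walkPalette H φ p.2.2.1} :=
    ⟨⟨⟨u, w, P, hP⟩, hS⟩⟩
  obtain ⟨⟨⟨u, w, P, hP⟩, hS⟩, hmax⟩ := Finite.exists_max
    fun p : {p : Σ u w, H.Path u w // S ⊆ walkPalette H φ p.2.2.1} => p.1.2.2.1.length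
  have hext : ∀ {x y} (Q : H.Walk x y), Q.IsPath → S ⊆ walkPalette H φ Q →
      Q.length = P.length → ∀ z, H.Adj x z → z ∈ Q.support := by
    intro x y Q hQ hSQ hQP z hz
    by_contra hzQ
    have := hmax ⟨⟨z, y, .cons hz.symm Q, hQ.cons hzQ⟩, hSQ.trans (by simp)⟩
    simp only [Walk.length_cons] at this
    omega
  refine ⟨u, w, P, hP, hS, fun y hy => hH.eq_snd_of_adj_start hP hy (hext P hP hS rfl y hy),
    fun y hy => hH.eq_penultimate_of_adj_end hP hy ?_⟩
  simpa using hext P.reverse hP.reverse (by simpa using hS) (by simp) y hy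

theorem palette_subset_singleton {u v : V} (h : ∀ y, H.Adj u y → y = v) :
    palette H φ u ⊆ {φ s(u, v)} := by
  rintro _ ⟨e, he, rfl⟩
  obtain ⟨y, hy, rfl⟩ := exists_adj_eq_of_mem_incidenceSet he
  rw [h y hy, Set.mem_singleton_iff]

theorem walkPalette_subset_image_pathTP {u w : V} {P : H.Walk u w} (hP : P.IsPath)
    (hlen : 2 ≤ P.length) (hu : ∀ y, H.Adj u y → y = P.snd)
    (hw : ∀ y, H.Adj w y → y = P.penultimate) : walkPalette H φ P ⊆ φ '' pathTP H P := by
  have hnil : ¬ P.Nil := by rw [← Walk.length_eq_zero_iff]; omega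
  intro c hc
  obtain ⟨x, hx, hcx⟩ : ∃ x ∈ P.support, c ∈ palette H φ x := by simpa [walkPalette] using hc
  rw [pathTP, if_neg (by omega), Set.image_iUnion₂]
  suffices ∃ y, (y ∈ P.support ∧ y ≠ u ∧ y ≠ w) ∧ c ∈ palette H φ y by
    simpa [palette] using this
  by_cases hxu : x = u
  · subst hxu
    refine ⟨P.snd, ⟨P.getVert_mem_support 1, (P.adj_snd hnil).ne', hP.snd_ne_end hlen⟩, ?_⟩
    rw [palette_subset_singleton hu hcx]
    exact mem_palette_right (P.adj_snd hnil)
  by_cases hxw : x = w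
  · subst hxw
    have hpen : P.penultimate ≠ u := by simpa using hP.reverse.snd_ne_end (by simpa using hlen)
    refine ⟨P.penultimate, ⟨P.getVert_mem_support _, hpen, (P.adj_penultimate hnil).ne⟩, ?_⟩
    rw [palette_subset_singleton hw hcx, Sym2.eq_swap]
    exact mem_palette_left (P.adj_penultimate hnil)
  exact ⟨x, ⟨hx, hxu, hxw⟩, hcx⟩

theorem IsProperEdgeColoring.image_pathTP_eq (hφ : IsProperEdgeColoring H t φ) {u w : V}
    {P : H.Walk u w} (hP : P.IsPath) (hS : Set.Icc 1 t ⊆ walkPalette H φ P)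
    (hu : ∀ y, H.Adj u y → y = P.snd) (hw : ∀ y, H.Adj w y → y = P.penultimate) :
    φ '' pathTP H P = Set.Icc 1 t := by
  cases P with
  | nil =>
    have hu₀ : palette H φ u = ∅ := by
      refine Set.eq_empty_of_forall_notMem ?_
      rintro _ ⟨e, he, rfl⟩
      obtain ⟨y, hy, rfl⟩ := exists_adj_eq_of_mem_incidenceSet he
      exact hy.ne (hu y hy).symm
    rw [walkPalette_nil, hu₀, Set.subset_empty_iff] at hS
    simp [pathTP, hS]
  | cons h Q =>
    cases Q with
    | cons h' Q =>
      refine subset_antisymm ?_ (hS.trans (walkPalette_subset_image_pathTP hP (by simp) hu hw))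
      rw [pathTP, if_neg (by simp), Set.image_iUnion₂]
      exact Set.iUnion₂_subset fun x _ => hφ.palette_subset x
    | nil =>
      have hu₁ := palette_subset_singleton (φ := φ) (by simpa using hu)
      have hw₁ := palette_subset_singleton (φ := φ) (by simpa using hw)
      rw [Sym2.eq_swap] at hw₁
      simp only [walkPalette_cons, walkPalette_nil] at hS
      simp only [pathTP, Walk.length_cons, Walk.length_nil, zero_add, le_refl, if_true,
        Walk.edges_cons, Walk.edges_nil, List.mem_singleton, Set.ofPred_eq_eq_singleton,
        Set.image_singleton]
      exact subset_antisymm (Set.singleton_subset_iff.2 (hφ.1 _ h))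
        (hS.trans (Set.union_subset hu₁ hw₁))

end Covering

/-- Lemma 4: in a cyclically-interval `t`-coloring of a tree, some `TP(b',b'')` receives all
`t` colors. -/
theorem stmt3 {V : Type*} [Fintype V] (H : SimpleGraph V) (hH : H.IsTree)
    (t : ℕ) (φ : Sym2 V → ℕ) (hφ : IsCyclicIntervalColoring H t φ) :
    ∃ (b' b'' : V) (p : H.Walk b' b''), p.IsPath ∧ φ '' pathTP H p = Set.Icc 1 t := by
  obtain ⟨u, w, P, hP, hS⟩ := hφ.exists_isPath_Icc_subset_walkPalette hH.1
  obtain ⟨u, w, P, hP, hS, hu, hw⟩ := exists_isPath_subset_walkPalette_adj_eq hH.2 hP hS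
  exact ⟨u, w, P, hP, hφ.1.image_pathTP_eq hP hS hu hw⟩
end

section
/- If a tree H admits a cyclically-interval t-coloring, then there exist vertices x′, x″ ∈ V(H) such that t ≤ |TP(x′, x″)|. -/
open SimpleGraph

/-!
A tree is simply connected, so a cyclically-interval colouring can be unwound. Cut the cyclic
spectrum of each vertex `v` open at some colour `h v`, adding `t` to the colours below the cut;
this turns the spectrum into an integer interval. At the two ends of an edge the cuts disagree by
at most one turn, and a potential `β` on the tree corrects that, so
`L v e = φ e + t * (β v + [φ e < h v])` is a lift of `φ` modulo `t` that is the same at both ends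
of each edge and whose spectra are intervals.

Let `m` and `M` be the least and the largest lifted colour, carried by edges `e₁` and `e₂`. On a
walk from an end of `e₁` to an end of `e₂`, consecutive spectra overlap, so their union contains
`[m, M]`, which contains every lifted colour and hence a representative of every residue mod `t`.
Extending a shortest such walk by `e₁` and `e₂` makes all its vertices internal, so the colours
of `TP` fill `ℤ/t`.
-/

theorem SimpleGraph.IsTree.exists_potential {V G : Type*} [AddCommGroup G] {H : SimpleGraph V}
    (hH : H.IsTree) (c : V → V → G) :
    ∃ β : V → G, ∀ u v, H.Adj u v → β u + c u v = β v + c v u := by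
  classical
  obtain ⟨r⟩ := hH.connected.nonempty
  choose P hP hPu using (hH.existsUnique_path r ·)
  have hstep : ∀ u v (h : H.Adj u v), P v = (P u).concat h ∨ P u = (P v).concat h.symm := by
    intro u v h
    by_cases hv : v ∈ (P u).support
    · right
      have htake : (P u).takeUntil v hv = P v := hPu v _ ((hP u).takeUntil hv)
      have hdrop : (P u).dropUntil v hv = .cons h.symm .nil :=
        (hH.existsUnique_path v u).unique ((hP u).dropUntil hv) (by simp [h.ne'])
      rw [Walk.concat_eq_append, ← htake, ← hdrop, Walk.take_spec]
    · exact .inl (hPu v _ ((hP u).concat hv h)).symm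
  refine ⟨fun v => ((P v).darts.map fun d => c d.fst d.snd - c d.snd d.fst).sum,
    fun u v h => ?_⟩
  rcases hstep u v h with e | e <;>
    simp only [e, Walk.darts_concat, List.concat_eq_append, List.map_append, List.sum_append,
      List.map_cons, List.map_nil, List.sum_cons, List.sum_nil] <;>
    abel

theorem SimpleGraph.Walk.uIcc_subset_biUnion_support {V α : Type*} [LinearOrder α]
    {H : SimpleGraph V} {S : V → Set α} (hS : ∀ v, (S v).OrdConnected)
    (hadj : ∀ u v, H.Adj u v → (S u ∩ S v).Nonempty) {x y : V} (w : H.Walk x y) {a b : α}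
    (ha : a ∈ S x) (hb : b ∈ S y) : Set.uIcc a b ⊆ ⋃ v ∈ w.support, S v := by
  induction w generalizing a with
  | nil => simpa using (hS _).uIcc_subset ha hb
  | cons h w ih =>
    obtain ⟨c, hcu, hcv⟩ := hadj _ _ h
    refine Set.uIcc_subset_uIcc_union_uIcc.trans (Set.union_subset ?_ ((ih hcv hb).trans ?_))
    · exact ((hS _).uIcc_subset ha hcu).trans
        (Set.subset_biUnion_of_mem (u := S) List.mem_cons_self)
    · exact Set.biUnion_subset_biUnion_left fun v hv => List.mem_cons_of_mem _ hv

theorem SimpleGraph.Walk.dist_lt_of_length_eq_dist {V : Type*} {H : SimpleGraph V} {a b x : V}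
    (q : H.Walk a b) (hq : q.length = H.dist a b) (hx : x ∈ q.support) (hxa : x ≠ a) :
    H.dist x b < H.dist a b := by
  classical
  have hlen := congrArg Walk.length (q.take_spec hx)
  rw [Walk.length_append] at hlen
  have htake : (q.takeUntil x hx).length ≠ 0 :=
    fun h0 => hxa (Walk.eq_of_length_eq_zero h0).symm
  have := H.dist_le (q.dropUntil x hx)
  omega

theorem SimpleGraph.Connected.exists_isPath_incidenceSet_subset_pathTP {V : Type*}
    {H : SimpleGraph V} (hH : H.Connected) {e₁ e₂ : Sym2 V} (he₁ : e₁ ∈ H.edgeSet)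
    (he₂ : e₂ ∈ H.edgeSet) (hne : e₁ ≠ e₂) :
    ∃ (u v : V) (p : H.Walk u v) (a b : V) (q : H.Walk a b), p.IsPath ∧ a ∈ e₁ ∧ b ∈ e₂ ∧
      ∀ w ∈ q.support, H.incidenceSet w ⊆ pathTP H p := by
  classical
  have hex : ∃ n, ∃ a ∈ e₁, ∃ b ∈ e₂, H.dist a b = n :=
    ⟨_, _, e₁.out_fst_mem, _, e₂.out_fst_mem, rfl⟩
  obtain ⟨a, ha, b, hb, hab⟩ := Nat.find_spec hex
  have hmin : ∀ a' ∈ e₁, ∀ b' ∈ e₂, H.dist a b ≤ H.dist a' b' :=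
    fun a' ha' b' hb' => hab ▸ Nat.find_min' hex ⟨a', ha', b', hb', rfl⟩
  obtain ⟨q, hq⟩ := hH.exists_walk_length_eq_dist a b
  set a' := Sym2.Mem.other ha
  set b' := Sym2.Mem.other hb
  have haa' : H.Adj a a' := by rw [← mem_edgeSet, Sym2.other_spec ha]; exact he₁
  have hbb' : H.Adj b b' := by rw [← mem_edgeSet, Sym2.other_spec hb]; exact he₂
  have ha'q : a' ∉ q.support := fun h =>
    (q.dist_lt_of_length_eq_dist hq h haa'.ne').not_ge (hmin a' (Sym2.other_mem ha) b hb)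
  have hb'q : b' ∉ q.support := by
    intro h
    have := q.reverse.dist_lt_of_length_eq_dist (by rw [Walk.length_reverse, hq, dist_comm])
      (by rwa [Walk.support_reverse, List.mem_reverse]) hbb'.ne'
    rw [dist_comm, dist_comm (u := b)] at this
    exact this.not_ge (hmin a ha b' (Sym2.other_mem hb))
  have ha'b' : a' ≠ b' := by
    intro h
    have := hmin a' (Sym2.other_mem ha) b' (Sym2.other_mem hb)
    rw [h, dist_self, Nat.le_zero, ← hq] at this
    obtain rfl := Walk.eq_of_length_eq_zero this
    refine hne ((Sym2.other_spec ha).symm.trans ?_)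
    rw [← Sym2.other_spec hb]
    exact congrArg _ h
  let p : H.Walk a' b' := .cons haa'.symm (q.concat hbb')
  have hp : p.IsPath := by
    refine (Walk.cons_isPath_iff _ _).2 ⟨(q.isPath_of_length_eq_dist hq).concat hb'q hbb', ?_⟩
    simp [Walk.support_concat, ha'q, ha'b']
  refine ⟨a', b', p, a, b, q, hp, ha, hb, fun w hw => ?_⟩
  rw [pathTP, if_neg (by simp [p])]
  refine Set.subset_biUnion_of_mem (u := fun x => H.incidenceSet x)
    ⟨by simp [p, Walk.support_concat, hw], ?_, ?_⟩
  · rintro rfl; exact ha'q hw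
  · rintro rfl; exact hb'q hw

theorem SimpleGraph.Adj.pathTP_cons_nil {V : Type*} {H : SimpleGraph V} {u v : V}
    (h : H.Adj u v) : pathTP H (Walk.cons h .nil) = {s(u, v)} := by
  rw [pathTP, if_pos (by simp)]
  ext
  simp

theorem ZMod.exists_mem_Icc_natCast_eq {t : ℕ} [NeZero t] (r : ZMod t) :
    ∃ c ∈ Set.Icc 1 t, (c : ZMod t) = r := by
  rcases eq_or_ne r 0 with rfl | hr
  · exact ⟨t, ⟨NeZero.one_le, le_rfl⟩, ZMod.natCast_self t⟩
  · exact ⟨r.val, ⟨ZMod.val_pos.2 hr, (ZMod.val_lt r).le⟩, ZMod.natCast_zmod_val r⟩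

theorem IsProperEdgeColoring.exists_natCast_eq {V : Type*} {H : SimpleGraph V} {t : ℕ}
    [NeZero t] {φ : Sym2 V → ℕ} (hφ : IsProperEdgeColoring H t φ) (r : ZMod t) :
    ∃ e ∈ H.edgeSet, (φ e : ZMod t) = r := by
  obtain ⟨c, hc, rfl⟩ := ZMod.exists_mem_Icc_natCast_eq r
  obtain ⟨e, he, rfl⟩ := hφ.2.2 c hc
  exact ⟨e, he, rfl⟩

def cyclicLift (t h c : ℕ) : ℤ := c + if c < h then (t : ℤ) else 0

theorem IsCyclicInterval.exists_ordConnected_image_cyclicLift {t : ℕ} {Q : Set ℕ}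
    (hQ : IsCyclicInterval t Q) : ∃ h, (cyclicLift t h '' Q).OrdConnected := by
  obtain ⟨i₁, ⟨h₁, h₁'⟩, i₂, ⟨h₂, h₂'⟩, rfl | rfl⟩ := hQ
  · refine ⟨0, ?_⟩
    have : cyclicLift t 0 '' Set.Icc (min i₁ i₂) (max i₁ i₂) =
        Set.Icc (min i₁ i₂ : ℤ) (max i₁ i₂) := by
      ext n
      simp only [cyclicLift, Set.mem_image, Set.mem_Icc, Nat.not_lt_zero, if_false, add_zero]
      constructor
      · rintro ⟨c, hc, rfl⟩; omega
      · intro hn; exact ⟨n.toNat, by omega, by omega⟩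
    rw [this]; exact Set.ordConnected_Icc
  · refine ⟨min i₁ i₂ + 1, ?_⟩
    have : cyclicLift t (min i₁ i₂ + 1) ''
          (Set.Icc 1 t \ (Set.Icc (min i₁ i₂) (max i₁ i₂) \ {i₁, i₂})) =
        Set.Icc (max (max i₁ i₂) (min i₁ i₂ + 1) : ℤ) (t + min i₁ i₂) := by
      ext n
      simp only [cyclicLift, Set.mem_image, Set.mem_Icc, Set.mem_sdiff, Set.mem_insert_iff,
        Set.mem_singleton_iff]
      constructor
      · rintro ⟨c, hc, rfl⟩; split_ifs <;> omega
      · intro hn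
        by_cases hnt : n ≤ t
        · exact ⟨n.toNat, by omega, by split_ifs <;> omega⟩
        · exact ⟨(n - t).toNat, by omega, by split_ifs <;> omega⟩
    rw [this]; exact Set.ordConnected_Icc

/-- `L v e` is the lift of `φ e` as seen from the end `v` of `e`. -/
structure IsIntervalLift {V : Type*} (H : SimpleGraph V) (t : ℕ) (φ : Sym2 V → ℕ)
    (L : V → Sym2 V → ℤ) : Prop where
  adj_eq : ∀ ⦃u v⦄, H.Adj u v → L u s(u, v) = L v s(u, v)
  ordConnected : ∀ v, (L v '' H.incidenceSet v).OrdConnected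
  cast_eq : ∀ v e, (L v e : ZMod t) = φ e

theorem SimpleGraph.IsTree.exists_isIntervalLift {V : Type*} {H : SimpleGraph V}
    (hH : H.IsTree) {t : ℕ} {φ : Sym2 V → ℕ}
    (hφ : ∀ v, (H.incidenceSet v).Nonempty → IsCyclicInterval t (φ '' H.incidenceSet v)) :
    ∃ L, IsIntervalLift H t φ L := by
  have hcut : ∀ v, ∃ h, (cyclicLift t h '' (φ '' H.incidenceSet v)).OrdConnected := by
    intro v
    rcases (H.incidenceSet v).eq_empty_or_nonempty with hv | hv
    · exact ⟨0, by simpa [hv] using Set.ordConnected_empty⟩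
    · exact (hφ v hv).exists_ordConnected_image_cyclicLift
  choose h hh using hcut
  obtain ⟨β, hβ⟩ := hH.exists_potential fun u v => if φ s(u, v) < h u then (1 : ℤ) else 0
  refine ⟨fun v e => cyclicLift t (h v) (φ e) + t * β v, fun u v huv => ?_, fun v => ?_,
    fun v e => ?_⟩
  · have := hβ u v huv
    rw [Sym2.eq_swap (a := v)] at this
    simp only [cyclicLift]
    split_ifs at this ⊢ <;> linear_combination (t : ℤ) * this
  · have := Set.ordConnected_image (OrderIso.addRight ((t : ℤ) * β v)) (hs := hh v)
    simpa [Set.image_image] using this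
  · simp only [cyclicLift]
    split_ifs <;> simp

theorem IsIntervalLift.eq_of_mem {V : Type*} {H : SimpleGraph V} {t : ℕ} {φ : Sym2 V → ℕ}
    {L : V → Sym2 V → ℤ} (hL : IsIntervalLift H t φ L) {e : Sym2 V} (he : e ∈ H.edgeSet)
    {u v : V} (hu : u ∈ e) (hv : v ∈ e) : L u e = L v e := by
  induction e using Sym2.ind with
  | _ x y =>
    have hxy : H.Adj x y := he
    rcases Sym2.mem_iff.1 hu with rfl | rfl <;> rcases Sym2.mem_iff.1 hv with rfl | rfl
    all_goals first | rfl | exact hL.adj_eq hxy | exact (hL.adj_eq hxy).symm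

theorem IsIntervalLift.exists_isPath_le_ncard_pathTP {V : Type*} [Finite V]
    {H : SimpleGraph V} {t : ℕ} {φ : Sym2 V → ℕ} {L : V → Sym2 V → ℤ} (hH : H.Connected)
    (hL : IsIntervalLift H t φ L) (ht : 2 ≤ t)
    (hφ : ∀ r : ZMod t, ∃ e ∈ H.edgeSet, (φ e : ZMod t) = r) :
    ∃ (x' x'' : V) (p : H.Walk x' x''), p.IsPath ∧ t ≤ (pathTP H p).ncard := by
  let D := {p : V × Sym2 V | p.2 ∈ H.incidenceSet p.1}
  have hD : D.Nonempty := by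
    obtain ⟨e, he, -⟩ := hφ 0
    exact ⟨(e.out.1, e), he, e.out_fst_mem⟩
  obtain ⟨⟨a, e₁⟩, ⟨he₁, ha⟩, hmin⟩ := D.exists_min_image (fun p => L p.1 p.2) D.toFinite hD
  obtain ⟨⟨b, e₂⟩, ⟨he₂, hb⟩, hmax⟩ := D.exists_max_image (fun p => L p.1 p.2) D.toFinite hD
  have hlift : ∀ r : ZMod t, ∃ n ∈ Set.uIcc (L a e₁) (L b e₂), (n : ZMod t) = r := by
    intro r
    obtain ⟨e, he, hr⟩ := hφ r
    have hmem : (e.out.1, e) ∈ D := ⟨he, e.out_fst_mem⟩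
    exact ⟨L e.out.1 e, Set.Icc_subset_uIcc ⟨hmin _ hmem, hmax _ hmem⟩, by rw [hL.cast_eq, hr]⟩
  have hne : e₁ ≠ e₂ := by
    rintro rfl
    have : Fact (1 < t) := ⟨ht⟩
    obtain ⟨n₀, hn₀, h₀⟩ := hlift 0
    obtain ⟨n₁, hn₁, h₁⟩ := hlift 1
    rw [hL.eq_of_mem he₁ ha hb, Set.uIcc_self, Set.mem_singleton_iff] at hn₀ hn₁
    exact zero_ne_one (h₀.symm.trans (hn₀.trans hn₁.symm ▸ h₁))
  obtain ⟨u, v, p, a', b', q, hp, ha', hb', hTP⟩ :=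
    hH.exists_isPath_incidenceSet_subset_pathTP he₁ he₂ hne
  have hcover := q.uIcc_subset_biUnion_support (S := fun w => L w '' H.incidenceSet w)
    hL.ordConnected (fun x y hxy => ⟨L x s(x, y), ⟨_, ⟨hxy, Sym2.mem_mk_left x y⟩, rfl⟩,
      ⟨_, ⟨hxy, Sym2.mem_mk_right x y⟩, (hL.adj_eq hxy).symm⟩⟩)
    ⟨e₁, ⟨he₁, ha'⟩, hL.eq_of_mem he₁ ha' ha⟩ ⟨e₂, ⟨he₂, hb'⟩, hL.eq_of_mem he₂ hb' hb⟩
  have hsurj : (fun f => (φ f : ZMod t)) '' pathTP H p = Set.univ := by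
    refine Set.eq_univ_of_forall fun r => ?_
    obtain ⟨n, hn, rfl⟩ := hlift r
    obtain ⟨w, hw, f, hf, rfl⟩ := Set.mem_iUnion₂.1 (hcover hn)
    exact ⟨f, hTP w hw hf, (hL.cast_eq w f).symm⟩
  refine ⟨u, v, p, hp, ?_⟩
  calc t = (Set.univ : Set (ZMod t)).ncard := by rw [Set.ncard_univ, Nat.card_zmod]
    _ ≤ (pathTP H p).ncard := hsurj ▸ Set.ncard_image_le (Set.toFinite _)

/-- Corollary 1: if a tree admits a cyclically-interval `t`-coloring, then some `TP(x',x'')`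
has at least `t` edges. -/
theorem stmt4 {V : Type*} [Fintype V] (H : SimpleGraph V) (hH : H.IsTree)
    (t : ℕ) (φ : Sym2 V → ℕ) (hφ : IsCyclicIntervalColoring H t φ) :
    ∃ (x' x'' : V) (p : H.Walk x' x''), p.IsPath ∧ t ≤ (pathTP H p).ncard := by
  rcases Nat.lt_or_ge t 2 with ht | ht
  · interval_cases t
    · obtain ⟨v⟩ := hH.connected.nonempty
      exact ⟨v, v, .nil, .nil, Nat.zero_le _⟩
    · obtain ⟨e, he, -⟩ := hφ.1.2.2 1 ⟨le_rfl, le_rfl⟩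
      induction e using Sym2.ind with
      | _ u v =>
        exact ⟨u, v, .cons he .nil, (Path.singleton he).2,
          by rw [he.pathTP_cons_nil, Set.ncard_singleton]⟩
  · have : NeZero t := ⟨by omega⟩
    obtain ⟨L, hL⟩ := hH.exists_isIntervalLift hφ.2
    exact hL.exists_isPath_le_ncard_pathTP hH.connected ht hφ.1.exists_natCast_eq
end

section
/- For any tree H, W_cyc(H) ≤ M(H), where W_cyc(H) is the maximum t for which H admits a cyclically-interval t-coloring and M(H) = max over pairs of vertices (b_i, b_j) of |TP(b_i, b_j)|. -/
open SimpleGraph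

/-!
A tree is simply connected, so a cyclically-interval `t`-coloring `φ` lifts to an integer edge
labelling `ℓ ≡ φ (mod t)` in which the palette of every vertex is an interval of integers. The
labels `ℓ` meet every residue class mod `t`, so the labels of the edges span at least `t` integers.
Take a path through an edge of minimal and an edge of maximal label: the palettes of its internal
vertices are intervals, consecutive ones overlap, so the labels of `TP` of that path cover the
whole span, and `|TP| ≥ t`.
-/

theorem Set.OrdConnected.union_of_mem {α : Type*} [LinearOrder α] {s t : Set α} {a : α}
    (hs : s.OrdConnected) (ht : t.OrdConnected) (has : a ∈ s) (hat : a ∈ t) :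
    (s ∪ t).OrdConnected := by
  refine ⟨fun x hx y hy z hz => ?_⟩
  rcases le_total z a with hza | haz
  · rcases hx with hx | hx
    · exact Or.inl (hs.out hx has ⟨hz.1, hza⟩)
    · exact Or.inr (ht.out hx hat ⟨hz.1, hza⟩)
  · rcases hy with hy | hy
    · exact Or.inl (hs.out has hy ⟨haz, hz.2⟩)
    · exact Or.inr (ht.out hat hy ⟨haz, hz.2⟩)

theorem IsCyclicInterval.exists_ordConnected_image {t : ℕ} {Q : Set ℕ}
    (hQ : IsCyclicInterval t Q) :
    ∃ k : ℕ → ℤ, ((fun c : ℕ => (c : ℤ) + t * k c) '' Q).OrdConnected := by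
  obtain ⟨i, ⟨hi, hit⟩, j, ⟨hj, hjt⟩, rfl | rfl⟩ := hQ
  · refine ⟨0, ⟨?_⟩⟩
    rintro _ ⟨a, ha, rfl⟩ _ ⟨b, hb, rfl⟩ z hz
    refine ⟨z.toNat, ?_, ?_⟩ <;> simp only [Set.mem_Icc, Pi.zero_apply] at * <;> omega
  -- The wrapping arc `{1..m} ∪ {M..t}` becomes the interval `{M..t+m}` once `{1..m}` is shifted
  -- up by `t`.
  · have hQ : ∀ c, c ∈ Set.Icc 1 t \ (Set.Icc (min i j) (max i j) \ {i, j}) ↔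
        1 ≤ c ∧ c ≤ min i j ∨ max i j ≤ c ∧ c ≤ t := by
      simp only [Set.mem_sdiff, Set.mem_Icc, Set.mem_insert_iff, Set.mem_singleton_iff]
      omega
    refine ⟨fun c => if c ≤ min i j then 1 else 0, ⟨?_⟩⟩
    rintro _ ⟨a, ha, rfl⟩ _ ⟨b, hb, rfl⟩ z ⟨hza, hzb⟩
    rw [hQ] at ha hb
    beta_reduce at hza hzb ⊢
    by_cases hzt : z ≤ t
    · refine ⟨z.toNat, (hQ _).2 ?_, ?_⟩ <;> beta_reduce <;> split_ifs at hza hzb ⊢ <;> omega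
    · refine ⟨(z - t).toNat, (hQ _).2 ?_, ?_⟩ <;> beta_reduce <;> split_ifs at hza hzb ⊢ <;>
        omega

theorem le_ncard_image_of_modEq {α : Type*} {s : Set α} (hs : s.Finite) {t : ℕ} {φ : α → ℕ}
    {ℓ : α → ℤ} (hsurj : ∀ c ∈ Set.Icc 1 t, ∃ a ∈ s, φ a = c)
    (hmod : ∀ a ∈ s, ℓ a ≡ φ a [ZMOD t]) : t ≤ (ℓ '' s).ncard := by
  obtain rfl | ht := Nat.eq_zero_or_pos t
  · exact Nat.zero_le _
  have : Nonempty α := let ⟨a, _⟩ := hsurj 1 ⟨le_rfl, ht⟩; ⟨a⟩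
  choose! g hgs hg using hsurj
  have hinj : Set.InjOn (ℓ ∘ g) (Set.Icc 1 t) := by
    intro c hc c' hc' hcc
    have hcc' : (c : ℤ) ≡ c' [ZMOD t] := by
      have := (hmod _ (hgs c hc)).symm.trans
        ((congrArg (· % (t : ℤ)) hcc).trans (hmod _ (hgs c' hc')))
      rwa [hg c hc, hg c' hc'] at this
    simp only [Set.mem_Icc] at hc hc'
    exact (Int.natCast_modEq_iff.mp hcc').eq_of_abs_lt (by rw [abs_lt]; omega)
  calc t = (Set.Icc 1 t).ncard := by simp
    _ ≤ (ℓ '' s).ncard :=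
      Set.ncard_le_ncard_of_injOn _ (fun c hc => ⟨g c, hgs c hc, rfl⟩) hinj (hs.image ℓ)

namespace SimpleGraph

variable {V : Type*} {G : SimpleGraph V}

theorem IsTree.eq_concat_or_eq_concat (hG : G.IsTree) {r x y : V} {p : G.Walk r x} {q : G.Walk r y}
    (hp : p.IsPath) (hq : q.IsPath) (h : G.Adj x y) :
    q = p.concat h ∨ p = q.concat h.symm := by
  classical
  by_cases hy : y ∈ p.support
  · right
    have htake : p.takeUntil y hy = q := (hG.existsUnique_path r y).unique (hp.takeUntil hy) hq
    have hdrop : p.dropUntil y hy = Walk.cons h.symm Walk.nil :=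
      (hG.existsUnique_path y x).unique (hp.dropUntil hy) (by simp [h.ne'])
    rw [← p.take_spec hy, htake, hdrop, Walk.concat_eq_append]
  · left
    have hpath : (p.concat h).IsPath := by
      rw [← Walk.isPath_reverse_iff, Walk.reverse_concat, Walk.cons_isPath_iff]
      exact ⟨hp.reverse, by simpa using hy⟩
    exact (hG.existsUnique_path r y).unique hq hpath

theorem IsTree.exists_potential_s5 {α : Type*} [AddCommGroup α] (hG : G.IsTree) (δ : V → V → α)
    (hδ : ∀ x y, δ y x = -δ x y) : ∃ σ : V → α, ∀ x y, G.Adj x y → σ y = σ x + δ x y := by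
  obtain ⟨r⟩ := hG.connected.nonempty
  choose P hP using fun x => (hG.existsUnique_path r x).exists
  have hsum_concat : ∀ {x y : V} (h : G.Adj x y) (p : G.Walk r x),
      ((p.concat h).darts.map fun d => δ d.fst d.snd).sum =
        (p.darts.map fun d => δ d.fst d.snd).sum + δ x y := by
    intro x y h p
    simp only [Walk.darts_concat, List.concat_eq_append, List.map_append, List.sum_append,
      List.map_cons, List.map_nil, List.sum_cons, List.sum_nil, add_zero]
  refine ⟨fun x => ((P x).darts.map fun d => δ d.fst d.snd).sum, fun x y h => ?_⟩
  rcases hG.eq_concat_or_eq_concat (hP x) (hP y) h with hPy | hPx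
  · simp only [hPy, hsum_concat]
  · simp only [hPx, hsum_concat]
    rw [hδ]
    abel

theorem IsTree.exists_isPath_mem_edges_of_adj (hG : G.IsTree) {r x y : V} {p : G.Walk r x}
    (hp : p.IsPath) (h : G.Adj x y) :
    ∃ (z : V) (q : G.Walk r z), q.IsPath ∧ s(x, y) ∈ q.edges ∧ ∀ e ∈ p.edges, e ∈ q.edges := by
  obtain ⟨q, hq, -⟩ := hG.existsUnique_path r y
  rcases hG.eq_concat_or_eq_concat hp hq h with rfl | rfl
  · exact ⟨y, p.concat h, hq, by simp [Walk.edges_concat],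
      fun e he => by simp [Walk.edges_concat, he]⟩
  · exact ⟨x, q.concat h.symm, hp, by simp [Walk.edges_concat, Sym2.eq_swap], fun _ => id⟩

theorem IsTree.exists_isPath_mem_edges (hG : G.IsTree) {e₁ e₂ : Sym2 V} (h₁ : e₁ ∈ G.edgeSet)
    (h₂ : e₂ ∈ G.edgeSet) :
    ∃ (u v : V) (p : G.Walk u v), p.IsPath ∧ e₁ ∈ p.edges ∧ e₂ ∈ p.edges := by
  induction e₁ using Sym2.ind with | _ a b => ?_
  induction e₂ using Sym2.ind with | _ c d => ?_
  obtain ⟨p, hp, -⟩ := hG.existsUnique_path a c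
  obtain ⟨z, w, hw, hcd, -⟩ := hG.exists_isPath_mem_edges_of_adj hp h₂
  obtain ⟨z', q, hq, hab, hwq⟩ := hG.exists_isPath_mem_edges_of_adj hw.reverse h₁
  exact ⟨z, z', q, hq, hab, hwq _ (by simpa [Walk.edges_reverse] using hcd)⟩

theorem pathTP_cons_cons {u w y v : V} (h : G.Adj u w) (h' : G.Adj w y) (q : G.Walk y v)
    (hp : (Walk.cons h (Walk.cons h' q)).IsPath) :
    pathTP G (Walk.cons h (Walk.cons h' q)) = G.incidenceSet w ∪ pathTP G (Walk.cons h' q) := by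
  obtain ⟨hq, hu⟩ := Walk.cons_isPath_iff _ _ |>.mp hp
  have hwv : w ≠ v := fun hwv => (Walk.cons_isPath_iff _ _ |>.mp hq).2 (hwv ▸ q.end_mem_support)
  have hinner : {x | x ∈ (Walk.cons h (Walk.cons h' q)).support ∧ x ≠ u ∧ x ≠ v} =
      insert w {x | x ∈ (Walk.cons h' q).support ∧ x ≠ w ∧ x ≠ v} := by
    ext x
    simp only [Walk.support_cons, List.mem_cons, Set.mem_ofPred_eq, Set.mem_insert_iff] at hu ⊢
    constructor
    · rintro ⟨rfl | rfl | hx, hxu, hxv⟩ <;> tauto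
    · rintro (rfl | ⟨rfl | hx, hxw, hxv⟩) <;> grind
  rw [pathTP, if_neg (by simp), hinner, Set.biUnion_insert]
  cases q with
  | nil =>
    rw [pathTP, if_pos (by simp)]
    have hempty : {x | x ∈ (Walk.cons h' Walk.nil : G.Walk w y).support ∧ x ≠ w ∧ x ≠ y} = ∅ := by
      ext x
      simp only [Walk.support_cons, Walk.support_nil, List.mem_cons, List.not_mem_nil]
      grind
    rw [hempty, Set.biUnion_empty, Set.union_empty, Set.union_eq_self_of_subset_right]
    simpa using h'
  | cons h'' q' => rw [pathTP, if_neg (by simp)]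

theorem Walk.IsPath.edges_subset_pathTP {u v : V} {p : G.Walk u v} (hp : p.IsPath) :
    {e | e ∈ p.edges} ⊆ pathTP G p := by
  induction p with
  | nil => simp
  | @cons u w v h q ih =>
    cases q with
    | nil => rw [pathTP, if_pos (by simp)]
    | cons h' q' =>
      rw [pathTP_cons_cons h h' q' hp, Walk.edges_cons]
      intro e he
      rcases List.mem_cons.mp he with rfl | he
      · exact Or.inl (G.mk'_mem_incidenceSet_right_iff.mpr h)
      · exact Or.inr (ih hp.of_cons he)

theorem Walk.IsPath.ordConnected_image_pathTP {β : Type*} [LinearOrder β] {ℓ : Sym2 V → β}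
    (hℓ : ∀ x, (ℓ '' G.incidenceSet x).OrdConnected) {u v : V} {p : G.Walk u v}
    (hp : p.IsPath) : (ℓ '' pathTP G p).OrdConnected := by
  induction p with
  | nil => simpa [pathTP] using Set.ordConnected_empty (α := β)
  | @cons u w v h q ih =>
    cases q with
    | nil => simpa [pathTP] using Set.ordConnected_singleton (a := ℓ s(u, w))
    | cons h' q' =>
      rw [pathTP_cons_cons h h' q' hp, Set.image_union]
      exact (hℓ w).union_of_mem (ih hp.of_cons)
        (Set.mem_image_of_mem ℓ (G.mk'_mem_incidenceSet_left_iff.mpr h'))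
        (Set.mem_image_of_mem ℓ (hp.of_cons.edges_subset_pathTP (by simp)))

theorem IsTree.exists_lift_of_isCyclicInterval (hG : G.IsTree) {t : ℕ} {φ : Sym2 V → ℕ}
    (hφ : ∀ x, (G.incidenceSet x).Nonempty → IsCyclicInterval t (φ '' G.incidenceSet x)) :
    ∃ ℓ : Sym2 V → ℤ, (∀ e, ℓ e ≡ φ e [ZMOD t]) ∧ ∀ x, (ℓ '' G.incidenceSet x).OrdConnected := by
  have hunwrap : ∀ x, ∃ k : ℕ → ℤ,
      ((fun c : ℕ => (c : ℤ) + t * k c) '' (φ '' G.incidenceSet x)).OrdConnected := by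
    intro x
    rcases (G.incidenceSet x).eq_empty_or_nonempty with hx | hx
    · exact ⟨0, by simpa [hx] using Set.ordConnected_empty⟩
    · exact (hφ x hx).exists_ordConnected_image
  choose k hk using hunwrap
  -- Across an edge `xy` the two local shifts of its color differ; on a tree this discrepancy is
  -- absorbed by shifting the whole palette of each vertex `x` by `t * σ x`.
  obtain ⟨σ, hσ⟩ := hG.exists_potential_s5 (fun x y => k x (φ s(x, y)) - k y (φ s(x, y)))
    (fun x y => by rw [Sym2.eq_swap]; abel)
  set f : V → Sym2 V → ℤ := fun x e => φ e + t * (σ x + k x (φ e)) with hf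
  have hf_mem : ∀ x, ∀ e ∈ G.incidenceSet x, ∀ y ∈ e, f y e = f x e := by
    rintro x e ⟨he, hxe⟩ y hy
    obtain ⟨z, rfl⟩ := Sym2.mem_iff_exists.mp hxe
    rcases Sym2.mem_iff.mp hy with rfl | rfl
    · rfl
    · simp only [hf, hσ x y he]
      ring
  refine ⟨fun e => f e.out.1 e, fun e => Int.add_mul_emod_self_left _ _ _, fun x => ?_⟩
  have himage : (fun e => f e.out.1 e) '' G.incidenceSet x =
      OrderIso.addLeft ((t : ℤ) * σ x) ''
        ((fun c : ℕ => (c : ℤ) + t * k x c) '' (φ '' G.incidenceSet x)) := by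
    simp only [Set.image_image]
    refine Set.image_congr fun e he => ?_
    rw [hf_mem x e he _ e.out_fst_mem]
    simp only [hf, OrderIso.addLeft_apply]
    ring
  rw [himage]
  have := hk x
  exact Set.ordConnected_image _

theorem Walk.IsPath.ncard_pathTP_le_treeM [Finite V] {u v : V} {p : G.Walk u v}
    (hp : p.IsPath) : (pathTP G p).ncard ≤ treeM G :=
  le_csSup ⟨Nat.card (Sym2 V), by rintro _ ⟨_, _, q, -, rfl⟩; exact Set.ncard_le_card _⟩
    ⟨u, v, p, hp, rfl⟩

end SimpleGraph

open SimpleGraph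

theorem stmt5_general {V : Type*} [Fintype V] (H : SimpleGraph V) (hH : H.IsTree) :
    Wcyc H ≤ treeM H := by
  refine csSup_le' fun t ⟨φ, hφ, hpal⟩ => ?_
  obtain ⟨ℓ, hmod, hℓ⟩ := hH.exists_lift_of_isCyclicInterval hpal
  have hspread : t ≤ (ℓ '' H.edgeSet).ncard :=
    le_ncard_image_of_modEq (Set.toFinite _) hφ.2.2 fun e _ => hmod e
  obtain rfl | ht := Nat.eq_zero_or_pos t
  · exact Nat.zero_le _
  have hE : H.edgeSet.Nonempty :=
    (Set.nonempty_of_ncard_ne_zero (s := ℓ '' H.edgeSet) (by omega)).of_image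
  obtain ⟨emin, hemin, hmin⟩ := Set.exists_min_image _ ℓ (Set.toFinite _) hE
  obtain ⟨emax, hemax, hmax⟩ := Set.exists_max_image _ ℓ (Set.toFinite _) hE
  obtain ⟨u, v, p, hp, hpmin, hpmax⟩ := hH.exists_isPath_mem_edges hemin hemax
  have hsub : ℓ '' H.edgeSet ⊆ ℓ '' pathTP H p := by
    rintro _ ⟨e, he, rfl⟩
    exact (hp.ordConnected_image_pathTP hℓ).out
      (Set.mem_image_of_mem ℓ (hp.edges_subset_pathTP hpmin))
      (Set.mem_image_of_mem ℓ (hp.edges_subset_pathTP hpmax)) ⟨hmin e he, hmax e he⟩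
  calc t ≤ (ℓ '' H.edgeSet).ncard := hspread
    _ ≤ (ℓ '' pathTP H p).ncard := Set.ncard_le_ncard hsub (Set.toFinite _)
    _ ≤ (pathTP H p).ncard := Set.ncard_image_le (Set.toFinite _)
    _ ≤ treeM H := hp.ncard_pathTP_le_treeM

/-- Corollary: for any tree `H`, `W_cyc(H) ≤ M(H)`. -/
theorem stmt5 {V : Type*} [Fintype V] (H : SimpleGraph V) (hH : H.IsTree)
    (hE : H.edgeSet.Nonempty) : Wcyc H ≤ treeM H :=
  stmt5_general H hH
end

section
/- For any tree H with at least one edge, the minimum number of colors in a cyclically-interval coloring of H equals its maximum degree: w_cyc(H) = Δ(H). -/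
open SimpleGraph

set_option linter.unusedSectionVars false



section Aux
variable {V : Type*} [Fintype V] [DecidableEq V] (H : SimpleGraph V) [DecidableRel H.Adj] (r : V)

/-- depth -/
noncomputable def dd (v : V) : ℕ := H.dist r v

/-- children -/
noncomputable def chl (u : V) : Finset V := (H.neighborFinset u).filter (fun w => dd H r w = dd H r u + 1)

noncomputable def ordV : V → ℕ := fun v => ((Fintype.equivFin V) v : ℕ)

noncomputable def idx (u w : V) : ℕ := 1 + ((chl H r u).filter (fun w' => ordV w' < ordV w)).card

noncomputable def par (v : V) : V :=
  if h : ∃ w, H.Adj v w ∧ dd H r w + 1 = dd H r v then h.choose else v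

noncomputable def colAux : ℕ → V → ℕ
  | 0, _ => 0
  | n+1, v => colAux n (par H r v) + idx H r (par H r v) v

noncomputable def col (v : V) : ℕ := colAux H r (dd H r v) v

noncomputable def phi (D : ℕ) : Sym2 V → ℕ :=
  Sym2.lift ⟨fun a b =>
    if H.dist r a < H.dist r b then col H r b % D + 1
    else if H.dist r b < H.dist r a then col H r a % D + 1 else 0, by
      intro a b
      dsimp only
      rcases lt_trichotomy (H.dist r a) (H.dist r b) with h|h|h
      · rw [if_pos h, if_neg (by omega), if_pos h]
      · rw [if_neg (by omega), if_neg (by omega), if_neg (by omega), if_neg (by omega)]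
      · rw [if_neg (by omega), if_pos h, if_pos h]⟩

noncomputable def base (v : V) : ℕ := if v = r then 1 else col H r v

noncomputable def eIdx (v w : V) : ℕ :=
  if v = r then idx H r v w - 1
  else if dd H r w = dd H r v + 1 then idx H r v w else 0

variable {H r}

lemma dd_r : dd H r r = 0 := SimpleGraph.dist_self

lemma isPath_concat {u v w : V} {p : H.Walk u v} (hp : p.IsPath) (h : H.Adj v w)
    (hw : w ∉ p.support) : (p.concat h).IsPath := by
  rw [← Walk.isPath_reverse_iff, Walk.reverse_concat]
  exact Walk.IsPath.cons (hp.reverse) (by simpa [Walk.support_reverse] using hw)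

lemma exists_shortest (hc : H.Connected) (v : V) :
    ∃ p : H.Walk r v, p.IsPath ∧ p.length = H.dist r v := by
  obtain ⟨p, hp⟩ := hc.exists_walk_length_eq_dist r v
  refine ⟨p.bypass, p.bypass_isPath, le_antisymm ?_ ?_⟩
  · exact hp ▸ Walk.length_bypass_le p
  · exact SimpleGraph.dist_le _

lemma path_length (ht : H.IsTree) {v : V} {p : H.Walk r v} (hp : p.IsPath) :
    p.length = H.dist r v := by
  obtain ⟨q, hq, hql⟩ := exists_shortest (r := r) ht.isConnected v
  obtain ⟨u, hu, huniq⟩ := ht.existsUnique_path r v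
  rw [huniq p hp, ← huniq q hq, hql]


lemma dd_pos (hc : H.Connected) {v : V} (hv : v ≠ r) : 0 < dd H r v :=
  hc.pos_dist_of_ne (Ne.symm hv)

lemma adj_dist (ht : H.IsTree) {u v : V} (huv : H.Adj u v) :
    dd H r v = dd H r u + 1 ∨ dd H r u = dd H r v + 1 := by
  obtain ⟨p, hp, hpl⟩ := exists_shortest (r := r) ht.isConnected u
  by_cases hv : v ∈ p.support
  · right
    have htake := path_length ht (hp.takeUntil hv)
    have hspec := Walk.take_spec p hv
    have hlen : (p.takeUntil v hv).length + (p.dropUntil v hv).length = p.length := by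
      rw [← Walk.length_append, hspec]
    have hdrop : (p.dropUntil v hv).length ≠ 0 := by
      intro h0
      exact H.ne_of_adj huv (Walk.eq_of_length_eq_zero h0).symm
    have htri : H.dist r u ≤ H.dist r v + 1 := by
      calc H.dist r u ≤ H.dist r v + H.dist v u := ht.isConnected.dist_triangle
      _ ≤ H.dist r v + 1 := by
          have : H.dist v u ≤ 1 := by
            simpa using SimpleGraph.dist_le (Walk.cons huv.symm Walk.nil)
          omega
    unfold dd at *
    omega
  · left
    have := path_length ht (isPath_concat hp huv hv)
    rw [Walk.length_concat, hpl] at this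
    unfold dd
    omega

lemma par_spec (ht : H.IsTree) {v : V} (hv : v ≠ r) :
    H.Adj v (par H r v) ∧ dd H r (par H r v) + 1 = dd H r v := by
  have hex : ∃ w, H.Adj v w ∧ dd H r w + 1 = dd H r v := by
    have hpos := dd_pos ht.isConnected hv
    obtain ⟨p, hp, hpl⟩ := exists_shortest (r := r) ht.isConnected v
    have hnn : ¬ p.reverse.Nil := by
      rw [Walk.not_nil_iff_lt_length, Walk.length_reverse]
      unfold dd at hpos; omega
    obtain ⟨u, hadj, q, hq⟩ := Walk.not_nil_iff.mp hnn
    refine ⟨u, hadj, ?_⟩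
    have hqp : q.reverse.IsPath := by
      have : p.reverse.IsPath := hp.reverse
      rw [hq] at this
      exact (this.of_cons).reverse
    have hql := path_length ht hqp
    have : q.length + 1 = p.length := by
      have := congrArg Walk.length hq
      rw [Walk.length_reverse, Walk.length_cons] at this
      omega
    rw [Walk.length_reverse] at hql
    unfold dd at *
    omega
  rw [par, dif_pos hex]
  exact hex.choose_spec

lemma par_unique (ht : H.IsTree) {v w : V} (hadj : H.Adj v w)
    (hd : dd H r w + 1 = dd H r v) : w = par H r v := by
  have hv : v ≠ r := by
    intro h; rw [h, dd_r] at hd; omega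
  obtain ⟨hadj', hd'⟩ := par_spec ht hv
  set w' := par H r v with hw'
  -- construct paths r → v through w and w'
  have key : ∀ x : V, H.Adj v x → dd H r x + 1 = dd H r v →
      ∃ p : H.Walk r v, p.IsPath ∧ ∃ (q : H.Walk r x) (h : H.Adj x v), p = q.concat h := by
    intro x hx hdx
    obtain ⟨q, hq, hql⟩ := exists_shortest (r := r) ht.isConnected x
    have hvq : v ∉ q.support := by
      intro hmem
      have := path_length ht (hq.takeUntil hmem)
      have := Walk.length_takeUntil_le q hmem
      unfold dd at *
      omega
    exact ⟨q.concat hx.symm, isPath_concat hq hx.symm hvq, q, hx.symm, rfl⟩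
  obtain ⟨p₁, hp₁, q₁, h₁, he₁⟩ := key w hadj hd
  obtain ⟨p₂, hp₂, q₂, h₂, he₂⟩ := key w' hadj' hd'
  obtain ⟨u, hu, huniq⟩ := ht.existsUnique_path r v
  have hpp : p₁ = p₂ := by rw [huniq p₁ hp₁, huniq p₂ hp₂]
  have := congrArg (fun p => (Walk.reverse p).support) hpp
  rw [he₁, he₂] at this
  simp only [Walk.reverse_concat, Walk.support_cons] at this
  have h1 := Walk.support_eq_cons q₁.reverse
  have h2 := Walk.support_eq_cons q₂.reverse
  rw [h1, h2] at this
  exact (List.cons.injEq _ _ _ _).mp ((List.cons.injEq _ _ _ _).mp this).2 |>.1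

lemma col_r : col H r r = 0 := by
  rw [col, dd_r]; rfl

lemma col_eq (ht : H.IsTree) {v : V} (hv : v ≠ r) :
    col H r v = col H r (par H r v) + idx H r (par H r v) v := by
  obtain ⟨hadj, hd⟩ := par_spec ht hv
  have hpos := dd_pos ht.isConnected hv
  obtain ⟨n, hn⟩ : ∃ n, dd H r v = n + 1 := ⟨dd H r v - 1, by omega⟩
  rw [col, hn]
  show colAux H r n (par H r v) + _ = _
  have : dd H r (par H r v) = n := by omega
  rw [col, this]


lemma ordV_inj : Function.Injective (ordV (V := V)) := by
  intro a b h
  exact (Fintype.equivFin V).injective (Fin.val_injective h)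

lemma mem_chl {u w : V} : w ∈ chl H r u ↔ H.Adj u w ∧ dd H r w = dd H r u + 1 := by
  simp [chl, Finset.mem_filter, SimpleGraph.mem_neighborFinset]

lemma idx_pos (u w : V) : 1 ≤ idx H r u w := Nat.le_add_right 1 _

lemma idx_le {u w : V} (hw : w ∈ chl H r u) : idx H r u w ≤ (chl H r u).card := by
  have : ((chl H r u).filter (fun w' => ordV w' < ordV w)).card < (chl H r u).card := by
    apply Finset.card_lt_card
    constructor
    · exact Finset.filter_subset _ _
    · intro hsub
      have := hsub hw
      simp at this
  rw [idx]; omega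

lemma idx_injOn {u w₁ w₂ : V} (h₁ : w₁ ∈ chl H r u) (h₂ : w₂ ∈ chl H r u)
    (h : idx H r u w₁ = idx H r u w₂) : w₁ = w₂ := by
  by_contra hne
  have hord : ordV w₁ ≠ ordV w₂ := fun he => hne (ordV_inj he)
  wlog hlt : ordV w₁ < ordV w₂ generalizing w₁ w₂
  · exact this h₂ h₁ h.symm (Ne.symm hne) (fun he => hne (ordV_inj he).symm) (by omega)
  have : ((chl H r u).filter (fun w' => ordV w' < ordV w₁)).card <
      ((chl H r u).filter (fun w' => ordV w' < ordV w₂)).card := by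
    apply Finset.card_lt_card
    constructor
    · intro x hx
      rw [Finset.mem_filter] at hx ⊢
      exact ⟨hx.1, by omega⟩
    · intro hsub
      have := hsub (Finset.mem_filter.mpr ⟨h₁, hlt⟩)
      simp at this
  rw [idx, idx] at h; omega

lemma idx_image (u : V) :
    (chl H r u).image (idx H r u) = Finset.Icc 1 (chl H r u).card := by
  apply Finset.eq_of_subset_of_card_le
  · intro i hi
    obtain ⟨w, hw, rfl⟩ := Finset.mem_image.mp hi
    exact Finset.mem_Icc.mpr ⟨idx_pos u w, idx_le hw⟩
  · rw [Nat.card_Icc]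
    rw [Finset.card_image_of_injOn (fun a ha b hb hab => idx_injOn ha hb hab)]
    omega

lemma idx_surj {u : V} {i : ℕ} (h1 : 1 ≤ i) (h2 : i ≤ (chl H r u).card) :
    ∃ w ∈ chl H r u, idx H r u w = i := by
  have : i ∈ (chl H r u).image (idx H r u) := by
    rw [idx_image]; exact Finset.mem_Icc.mpr ⟨h1, h2⟩
  simpa using this

lemma chl_card_root (ht : H.IsTree) : (chl H r r).card = H.degree r := by
  rw [SimpleGraph.degree]
  congr 1
  rw [chl, Finset.filter_eq_self]
  intro w hw
  rw [SimpleGraph.mem_neighborFinset] at hw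
  rcases adj_dist (r := r) ht hw with h | h
  · exact h
  · rw [dd_r] at h; omega

lemma chl_card (ht : H.IsTree) {v : V} (hv : v ≠ r) :
    (chl H r v).card + 1 = H.degree v := by
  have hsplit := Finset.card_filter_add_card_filter_not
    (s := H.neighborFinset v) (p := fun w => dd H r w = dd H r v + 1)
  have hone : (H.neighborFinset v).filter (fun w => ¬ dd H r w = dd H r v + 1)
      = {par H r v} := by
    obtain ⟨hadj, hd⟩ := par_spec (r := r) ht hv
    apply Finset.eq_singleton_iff_unique_mem.mpr
    constructor
    · rw [Finset.mem_filter, SimpleGraph.mem_neighborFinset]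
      exact ⟨hadj, by omega⟩
    · intro w hw
      rw [Finset.mem_filter, SimpleGraph.mem_neighborFinset] at hw
      obtain ⟨hwa, hwd⟩ := hw
      rcases adj_dist (r := r) ht hwa with h | h
      · exact absurd h hwd
      · exact par_unique ht hwa (by omega)
  rw [hone, Finset.card_singleton] at hsplit
  rw [chl, SimpleGraph.degree]
  exact hsplit


lemma phi_eval {D : ℕ} {u v : V} (hd : dd H r v = dd H r u + 1) :
    phi H r D s(u, v) = col H r v % D + 1 := by
  unfold dd at hd
  rw [phi, Sym2.lift_mk]
  dsimp only
  rw [if_pos (by omega)]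

lemma phi_val (ht : H.IsTree) {D : ℕ} {v w : V} (h : H.Adj v w) :
    phi H r D s(v, w) = (base H r v + eIdx H r v w) % D + 1 := by
  rcases adj_dist (r := r) ht h with hd | hd
  · -- w is a child of v
    have hpw : v = par H r w := par_unique ht h.symm (by omega)
    have hwr : w ≠ r := by
      intro he; rw [he, dd_r] at hd; omega
    have hcol : col H r w = col H r v + idx H r v w := by
      rw [col_eq ht hwr, ← hpw]
    rw [phi_eval hd, hcol]
    by_cases hvr : v = r
    · rw [base, if_pos hvr, eIdx, if_pos hvr, hvr, col_r]
      have := idx_pos (H := H) (r := r) r w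
      congr 2
      omega
    · rw [base, if_neg hvr, eIdx, if_neg hvr, if_pos hd]
  · -- w is the parent of v
    have hvr : v ≠ r := by
      intro he; rw [he, dd_r] at hd; omega
    rw [Sym2.eq_swap, phi_eval hd, base, if_neg hvr, eIdx, if_neg hvr,
      if_neg (by omega : ¬ dd H r w = dd H r v + 1)]
    simp

lemma mem_chl_of_child (ht : H.IsTree) {v w : V} (h : H.Adj v w)
    (hd : dd H r w = dd H r v + 1) : w ∈ chl H r v := mem_chl.mpr ⟨h, hd⟩

lemma eIdx_lt (ht : H.IsTree) {v w : V} (h : H.Adj v w) :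
    eIdx H r v w < H.degree v := by
  have hdegpos : 0 < H.degree v := by
    rw [← SimpleGraph.card_neighborFinset_eq_degree]
    exact Finset.card_pos.mpr ⟨w, by rw [SimpleGraph.mem_neighborFinset]; exact h⟩
  by_cases hvr : v = r
  · rw [eIdx, if_pos hvr]
    rcases adj_dist (r := r) ht h with hd | hd
    · have h1 := idx_le (mem_chl_of_child ht h hd)
      have h2 : (chl H r v).card = H.degree v := by rw [hvr]; exact chl_card_root ht
      omega
    · have h0 : dd H r v = 0 := by rw [hvr, dd_r]
      omega
  · rw [eIdx, if_neg hvr]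
    split
    · next hd =>
      have := idx_le (mem_chl_of_child ht h hd)
      have := chl_card (r := r) ht hvr
      omega
    · omega

lemma eIdx_inj (ht : H.IsTree) {v w₁ w₂ : V} (h₁ : H.Adj v w₁) (h₂ : H.Adj v w₂)
    (hne : w₁ ≠ w₂) : eIdx H r v w₁ ≠ eIdx H r v w₂ := by
  by_cases hvr : v = r
  · have h0 : dd H r v = 0 := by rw [hvr, dd_r]
    have hc₁ : w₁ ∈ chl H r v := by
      rcases adj_dist (r := r) ht h₁ with hd | hd
      · exact mem_chl_of_child ht h₁ hd
      · omega
    have hc₂ : w₂ ∈ chl H r v := by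
      rcases adj_dist (r := r) ht h₂ with hd | hd
      · exact mem_chl_of_child ht h₂ hd
      · omega
    rw [eIdx, if_pos hvr, eIdx, if_pos hvr]
    intro he
    have p₁ := idx_pos (H := H) (r := r) v w₁
    have p₂ := idx_pos (H := H) (r := r) v w₂
    exact hne (idx_injOn hc₁ hc₂ (by omega))
  · rw [eIdx, if_neg hvr, eIdx, if_neg hvr]
    rcases adj_dist (r := r) ht h₁ with hd₁ | hd₁ <;>
      rcases adj_dist (r := r) ht h₂ with hd₂ | hd₂
    · rw [if_pos hd₁, if_pos hd₂]
      intro he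
      exact hne (idx_injOn (mem_chl_of_child ht h₁ hd₁) (mem_chl_of_child ht h₂ hd₂) he)
    · rw [if_pos hd₁, if_neg (by omega : ¬ dd H r w₂ = dd H r v + 1)]
      have := idx_pos (H := H) (r := r) v w₁
      omega
    · rw [if_neg (by omega : ¬ dd H r w₁ = dd H r v + 1), if_pos hd₂]
      have := idx_pos (H := H) (r := r) v w₂
      omega
    · exfalso
      exact hne ((par_unique (r := r) ht h₁ (by omega)).trans (par_unique (r := r) ht h₂ (by omega)).symm)

lemma eIdx_surj (ht : H.IsTree) {v : V} {i : ℕ} (hi : i < H.degree v) :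
    ∃ w, H.Adj v w ∧ eIdx H r v w = i := by
  by_cases hvr : v = r
  · have h2 : (chl H r v).card = H.degree v := by rw [hvr]; exact chl_card_root ht
    obtain ⟨w, hw, hidx⟩ := idx_surj (H := H) (r := r) (u := v) (i := i + 1) (by omega)
      (by omega)
    exact ⟨w, (mem_chl.mp hw).1, by rw [eIdx, if_pos hvr, hidx]; omega⟩
  · rcases Nat.eq_zero_or_pos i with rfl | hipos
    · obtain ⟨hadj, hd⟩ := par_spec (r := r) ht hvr
      exact ⟨par H r v, hadj, by rw [eIdx, if_neg hvr, if_neg (by omega)]⟩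
    · obtain ⟨w, hw, hidx⟩ := idx_surj (H := H) (r := r) (u := v) (i := i) hipos
        (by have := chl_card (r := r) ht hvr; omega)
      obtain ⟨hadj, hd⟩ := mem_chl.mp hw
      exact ⟨w, hadj, by rw [eIdx, if_neg hvr, if_pos hd, hidx]⟩

lemma mem_incidenceSet_iff {v : V} {e : Sym2 V} :
    e ∈ H.incidenceSet v ↔ ∃ w, H.Adj v w ∧ e = s(v, w) := by
  constructor
  · rintro ⟨he, hv⟩
    obtain ⟨w, rfl⟩ := Sym2.mem_iff_exists.mp hv
    exact ⟨w, (SimpleGraph.mem_edgeSet H).mp he, rfl⟩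
  · rintro ⟨w, hw, rfl⟩
    exact ⟨(SimpleGraph.mem_edgeSet H).mpr hw, Sym2.mem_mk_left v w⟩

lemma image_phi (ht : H.IsTree) {D : ℕ} (v : V) :
    phi H r D '' H.incidenceSet v
      = (fun i => (base H r v + i) % D + 1) '' Set.Iio (H.degree v) := by
  ext c
  constructor
  · rintro ⟨e, he, rfl⟩
    obtain ⟨w, hw, rfl⟩ := mem_incidenceSet_iff.mp he
    exact ⟨eIdx H r v w, eIdx_lt ht hw, (phi_val ht hw).symm⟩
  · rintro ⟨i, hi, rfl⟩
    obtain ⟨w, hw, hidx⟩ := eIdx_surj ht (Set.mem_Iio.mp hi)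
    refine ⟨s(v, w), mem_incidenceSet_iff.mpr ⟨w, hw, rfl⟩, ?_⟩
    rw [phi_val ht hw, hidx]

end Aux

lemma mod_shift_inj {D b i j : ℕ} (hi : i < D) (hj : j < D)
    (h : (b + i) % D = (b + j) % D) : i = j := by
  have := Nat.ModEq.add_left_cancel' b (h : (b + i) ≡ (b + j) [MOD D])
  rwa [Nat.ModEq, Nat.mod_eq_of_lt hi, Nat.mod_eq_of_lt hj] at this

lemma cyc_mem {D a m y : ℕ} (hD : 0 < D) :
    (y ∈ (fun i => (a + i) % D + 1) '' Set.Iio m) ↔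
      ∃ i < m, (a % D + i) % D + 1 = y := by
  constructor
  · rintro ⟨i, hi, rfl⟩
    exact ⟨i, hi, by rw [Nat.mod_add_mod]⟩
  · rintro ⟨i, hi, rfl⟩
    exact ⟨i, hi, by rw [Nat.mod_add_mod]⟩

lemma cyc_interval (D a m : ℕ) (hm1 : 1 ≤ m) (hmD : m ≤ D) :
    IsCyclicInterval D ((fun i => (a + i) % D + 1) '' Set.Iio m) := by
  have hD : 0 < D := lt_of_lt_of_le hm1 hmD
  have hbD : a % D < D := Nat.mod_lt _ hD
  set b := a % D with hb
  by_cases h : b + m ≤ D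
  · refine ⟨b + 1, Set.mem_Icc.mpr (by omega), b + m, Set.mem_Icc.mpr (by omega), Or.inl ?_⟩
    ext y
    rw [cyc_mem hD, min_eq_left (by omega), max_eq_right (by omega), Set.mem_Icc]
    constructor
    · rintro ⟨i, hi, rfl⟩
      rw [Nat.mod_eq_of_lt (by omega)]
      omega
    · intro hy
      refine ⟨y - 1 - b, by omega, ?_⟩
      rw [Nat.mod_eq_of_lt (by omega)]
      omega
  · refine ⟨b + m - D, Set.mem_Icc.mpr (by omega), b + 1, Set.mem_Icc.mpr (by omega), Or.inr ?_⟩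
    have hmin : min (b + m - D) (b + 1) = b + m - D := by omega
    have hmax : max (b + m - D) (b + 1) = b + 1 := by omega
    rw [hmin, hmax]
    ext y
    rw [cyc_mem hD]
    simp only [Set.mem_diff, Set.mem_Icc, Set.mem_insert_iff, Set.mem_singleton_iff]
    constructor
    · rintro ⟨i, hi, rfl⟩
      by_cases hcase : b + i < D
      · rw [Nat.mod_eq_of_lt hcase]
        omega
      · rw [Nat.mod_eq_sub_mod (by omega), Nat.mod_eq_of_lt (by omega)]
        omega
    · rintro ⟨⟨hy1, hy2⟩, hy3⟩
      by_cases hyb : b + 1 ≤ y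
      · refine ⟨y - 1 - b, by omega, ?_⟩
        rw [Nat.mod_eq_of_lt (by omega)]
        omega
      · have hy4 : y ≤ b + m - D := by omega
        refine ⟨y - 1 + D - b, by omega, ?_⟩
        rw [Nat.mod_eq_sub_mod (by omega), Nat.mod_eq_of_lt (by omega)]
        omega

lemma cyc_full (D a : ℕ) (hD : 0 < D) :
    (fun i => (a + i) % D + 1) '' Set.Iio D = Set.Icc 1 D := by
  have hbD : a % D < D := Nat.mod_lt _ hD
  set b := a % D with hb
  ext y
  rw [cyc_mem hD, Set.mem_Icc]
  constructor
  · rintro ⟨i, hi, rfl⟩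
    have := Nat.mod_lt (a % D + i) hD
    omega
  · intro hy
    by_cases hyb : b + 1 ≤ y
    · refine ⟨y - 1 - b, by omega, ?_⟩
      rw [Nat.mod_eq_of_lt (by omega)]
      omega
    · refine ⟨y - 1 + D - b, by omega, ?_⟩
      rw [Nat.mod_eq_sub_mod (by omega), Nat.mod_eq_of_lt (by omega)]
      omega

section Main
variable {V : Type*} [Fintype V] [DecidableEq V] {H : SimpleGraph V} [DecidableRel H.Adj]

lemma degree_pos_of_incidence {v : V} (h : (H.incidenceSet v).Nonempty) :
    0 < H.degree v := by
  obtain ⟨e, he⟩ := h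
  obtain ⟨w, hw, rfl⟩ := mem_incidenceSet_iff.mp he
  rw [← SimpleGraph.card_neighborFinset_eq_degree]
  exact Finset.card_pos.mpr ⟨w, by rw [SimpleGraph.mem_neighborFinset]; exact hw⟩

lemma maxDegree_pos (hE : H.edgeSet.Nonempty) : 0 < H.maxDegree := by
  obtain ⟨e, he⟩ := hE
  induction e with
  | _ a b =>
    have hadj : H.Adj a b := (SimpleGraph.mem_edgeSet H).mp he
    have h1 : 0 < H.degree a := by
      rw [← SimpleGraph.card_neighborFinset_eq_degree]
      exact Finset.card_pos.mpr ⟨b, by rw [SimpleGraph.mem_neighborFinset]; exact hadj⟩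
    exact lt_of_lt_of_le h1 (H.degree_le_maxDegree a)

theorem tree_coloring (ht : H.IsTree) (hE : H.edgeSet.Nonempty) (r : V) :
    IsCyclicIntervalColoring H H.maxDegree (phi H r H.maxDegree) := by
  have hD : 0 < H.maxDegree := maxDegree_pos hE
  have hne : Nonempty V := ⟨r⟩
  constructor
  · refine ⟨?_, ?_, ?_⟩
    · -- colors in range
      intro e he
      induction e with
      | _ a b =>
        have hadj : H.Adj a b := (SimpleGraph.mem_edgeSet H).mp he
        rw [phi_val ht hadj, Set.mem_Icc]
        have := Nat.mod_lt (base H r a + eIdx H r a b) hD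
        omega
    · -- proper
      intro e₁ he₁ e₂ he₂ hne12 hx
      obtain ⟨x, hx1, hx2⟩ := hx
      obtain ⟨w₁, rfl⟩ := Sym2.mem_iff_exists.mp hx1
      obtain ⟨w₂, rfl⟩ := Sym2.mem_iff_exists.mp hx2
      have h₁ : H.Adj x w₁ := (SimpleGraph.mem_edgeSet H).mp he₁
      have h₂ : H.Adj x w₂ := (SimpleGraph.mem_edgeSet H).mp he₂
      have hww : w₁ ≠ w₂ := fun h => hne12 (by rw [h])
      rw [phi_val ht h₁, phi_val ht h₂]
      intro heq
      have hi₁ : eIdx H r x w₁ < H.maxDegree :=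
        lt_of_lt_of_le (eIdx_lt ht h₁) (H.degree_le_maxDegree x)
      have hi₂ : eIdx H r x w₂ < H.maxDegree :=
        lt_of_lt_of_le (eIdx_lt ht h₂) (H.degree_le_maxDegree x)
      exact eIdx_inj ht h₁ h₂ hww (mod_shift_inj (b := base H r x) hi₁ hi₂ (by omega))
    · -- all colors used
      intro c hc
      obtain ⟨v, hv⟩ := H.exists_maximal_degree_vertex
      have himg := image_phi (r := r) ht (D := H.maxDegree) v
      rw [← hv] at himg
      rw [cyc_full _ _ hD] at himg
      have : c ∈ phi H r H.maxDegree '' H.incidenceSet v := by rw [himg]; exact hc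
      obtain ⟨e, he, rfl⟩ := this
      exact ⟨e, he.1, rfl⟩
  · -- cyclic interval at every vertex
    intro x hx
    have hdeg : 0 < H.degree x := degree_pos_of_incidence hx
    rw [image_phi (r := r) ht]
    exact cyc_interval _ _ _ hdeg (H.degree_le_maxDegree x)

theorem coloring_lower [Nonempty V] {t : ℕ} {φ : Sym2 V → ℕ}
    (h : IsCyclicIntervalColoring H t φ) : H.maxDegree ≤ t := by
  obtain ⟨v, hv⟩ := H.exists_maximal_degree_vertex
  have hcard : (H.incidenceFinset v).card = H.degree v :=
    H.card_incidenceFinset_eq_degree v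
  have hinj : Set.InjOn φ (H.incidenceFinset v : Set (Sym2 V)) := by
    intro e₁ he₁ e₂ he₂ heq
    by_contra hne12
    have m₁ : e₁ ∈ H.incidenceSet v := by
      rwa [Finset.mem_coe, SimpleGraph.mem_incidenceFinset] at he₁
    have m₂ : e₂ ∈ H.incidenceSet v := by
      rwa [Finset.mem_coe, SimpleGraph.mem_incidenceFinset] at he₂
    exact h.1.2.1 e₁ m₁.1 e₂ m₂.1 hne12 ⟨v, m₁.2, m₂.2⟩ heq
  have hsub : (H.incidenceFinset v).image φ ⊆ Finset.Icc 1 t := by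
    intro c hc
    obtain ⟨e, he, rfl⟩ := Finset.mem_image.mp hc
    have me : e ∈ H.incidenceSet v := by
      rwa [SimpleGraph.mem_incidenceFinset] at he
    have := h.1.1 e me.1
    rw [Set.mem_Icc] at this
    exact Finset.mem_Icc.mpr this
  have hle := Finset.card_le_card hsub
  rw [Finset.card_image_of_injOn (by exact_mod_cast hinj), hcard, Nat.card_Icc] at hle
  omega


theorem stmt9' {V : Type*} [Fintype V] [DecidableEq V] (H : SimpleGraph V) [DecidableRel H.Adj]
    (hH : H.IsTree) (hE : H.edgeSet.Nonempty) : wcyc H = H.maxDegree := by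
  have hne : Nonempty V := ⟨hE.some.out.1⟩
  have hmem : H.maxDegree ∈ {t | ∃ φ, IsCyclicIntervalColoring H t φ} :=
    ⟨_, tree_coloring hH hE (Classical.arbitrary V)⟩
  refine le_antisymm (Nat.sInf_le hmem) ?_
  have hsm := Nat.sInf_mem ⟨H.maxDegree, hmem⟩
  obtain ⟨φ, hφ⟩ := hsm
  exact coloring_lower hφ

end Main


/-- For any tree `H` with at least one edge, `w_cyc(H) = Δ(H)`. -/
theorem stmt9 {V : Type*} [Fintype V] [DecidableEq V] (H : SimpleGraph V) [DecidableRel H.Adj]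
    (hH : H.IsTree) (hE : H.edgeSet.Nonempty) : wcyc H = H.maxDegree := by
  exact stmt9' H hH hE
end

section
/- For any integer k ≥ 2, the even cycle C_{2k} admits an interval t-coloring if and only if t ∈ [2, k+1]; in particular C_{2k} is interval colorable. -/
open SimpleGraph

/-!
At a vertex of degree two an interval coloring shows two colors differing by exactly one, so
around `C_n` the colors `c i` of the edges `s(i, i + 1)` form a cyclic sequence with steps `±1`,
and conversely every such sequence with range `[1, t]` is an interval `t`-coloring. Walking from
an edge of color `1` to an edge of color `t` in either direction around the cycle takes at least
`t - 1` steps, hence `2 (t - 1) ≤ n`. For even `n` and `2 ≤ t ≤ n / 2 + 1` the sequence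
`1, 2, …, t, …, 2` followed by `1, 2, 1, 2, …` closes up.
-/

section CycleGraph

variable {n : ℕ} [NeZero n]

lemma cycleGraph_adj_iff_eq_add_one (hn : 2 ≤ n) {u v : Fin n} :
    (cycleGraph n).Adj u v ↔ v = u + 1 ∨ u = v + 1 := by
  obtain ⟨n, rfl⟩ : ∃ m, n = m + 2 := ⟨n - 2, by omega⟩
  rw [cycleGraph_adj, sub_eq_iff_eq_add, sub_eq_iff_eq_add, add_comm 1, add_comm 1]
  exact or_comm

lemma edgeSet_cycleGraph (hn : 2 ≤ n) :
    (cycleGraph n).edgeSet = Set.range fun i : Fin n ↦ s(i, i + 1) := by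
  ext ⟨u, v⟩
  simp only [mem_edgeSet, cycleGraph_adj_iff_eq_add_one hn, Set.mem_range, Sym2.eq_iff]
  constructor
  · rintro (rfl | rfl)
    · exact ⟨u, .inl ⟨rfl, rfl⟩⟩
    · exact ⟨v, .inr ⟨rfl, rfl⟩⟩
  · rintro ⟨i, ⟨rfl, rfl⟩ | ⟨rfl, rfl⟩⟩
    · exact .inl rfl
    · exact .inr rfl

lemma incidenceSet_cycleGraph (hn : 2 ≤ n) (v : Fin n) :
    (cycleGraph n).incidenceSet v = (fun i ↦ s(i, i + 1)) '' {v - 1, v} := by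
  ext e
  simp only [incidenceSet, edgeSet_cycleGraph hn, Set.mem_ofPred_eq, Set.mem_range,
    Set.mem_image, Set.mem_insert_iff, Set.mem_singleton_iff]
  constructor
  · rintro ⟨⟨i, rfl⟩, hv⟩
    rcases Sym2.mem_iff.1 hv with rfl | rfl
    · exact ⟨v, .inr rfl, rfl⟩
    · exact ⟨i, .inl (add_sub_cancel_right i 1).symm, rfl⟩
  · rintro ⟨i, rfl | rfl, rfl⟩
    · exact ⟨⟨v - 1, rfl⟩, by simp⟩
    · exact ⟨⟨i, rfl⟩, by simp⟩

lemma injective_cycleGraph_edge (hn : 3 ≤ n) : Function.Injective fun i : Fin n ↦ s(i, i + 1) := by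
  intro i j hij
  rcases Sym2.eq_iff.1 hij with ⟨h, -⟩ | ⟨rfl, h⟩
  · exact h
  · rw [add_assoc, add_eq_left, Fin.ext_iff, Fin.val_add, Fin.val_one',
      Nat.one_mod_eq_one.mpr (by omega), Fin.val_zero, Nat.mod_eq_of_lt (by omega)] at h
    omega

end CycleGraph

lemma Nat.exists_pair_eq_Icc_iff {x y : ℕ} (hxy : x ≠ y) :
    (∃ a b, ({x, y} : Set ℕ) = Set.Icc a b) ↔ y = x + 1 ∨ x = y + 1 := by
  constructor
  · rintro ⟨a, b, h⟩
    simp only [Set.ext_iff, Set.mem_insert_iff, Set.mem_singleton_iff, Set.mem_Icc] at h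
    have := h x; have := h y; have := h a; have := h b; have := h (a + 1)
    omega
  · rintro (rfl | rfl)
    · exact ⟨x, x + 1, by ext; simp; omega⟩
    · exact ⟨y, y + 1, by ext; simp; omega⟩

def HasUnitSteps {n : ℕ} [NeZero n] (c : Fin n → ℕ) : Prop :=
  ∀ i, c (i + 1) = c i + 1 ∨ c i = c (i + 1) + 1

section CycleColoring

variable {n t : ℕ} [NeZero n]

lemma IsIntervalColoring.hasUnitSteps_cycleGraph (hn : 3 ≤ n) {φ : Sym2 (Fin n) → ℕ}
    (hφ : IsIntervalColoring (cycleGraph n) t φ) : HasUnitSteps fun i ↦ φ s(i, i + 1) := by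
  intro i
  obtain ⟨⟨-, hproper, -⟩, hint⟩ := hφ
  have hn2 : 2 ≤ n := by omega
  have hinc := incidenceSet_cycleGraph hn2 (i + 1)
  rw [add_sub_cancel_right, Set.image_pair] at hinc
  have hne : φ s(i, i + 1) ≠ φ s(i + 1, i + 1 + 1) :=
    hproper _ (edgeSet_cycleGraph hn2 ▸ ⟨i, rfl⟩) _ (edgeSet_cycleGraph hn2 ▸ ⟨i + 1, rfl⟩)
      ((injective_cycleGraph_edge hn).ne (by simp; omega)) ⟨i + 1, by simp, by simp⟩
  rw [← Nat.exists_pair_eq_Icc_iff hne, ← Set.image_pair, ← hinc]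
  exact hint _ (hinc ▸ Set.insert_nonempty _ _)

lemma isIntervalColoring_cycleGraph_extend (hn : 3 ≤ n) {c : Fin n → ℕ}
    (hrange : Set.range c = Set.Icc 1 t) (hc : HasUnitSteps c) :
    IsIntervalColoring (cycleGraph n) t (Function.extend (fun i : Fin n ↦ s(i, i + 1)) c 0) := by
  have hn2 : 2 ≤ n := by omega
  set φ := Function.extend (fun i : Fin n ↦ s(i, i + 1)) c 0
  have hφ : ∀ i, φ s(i, i + 1) = c i := (injective_cycleGraph_edge hn).extend_apply c 0
  have hstep (x : Fin n) : c x = c (x - 1) + 1 ∨ c (x - 1) = c x + 1 := by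
    simpa using hc (x - 1)
  have hinc (x : Fin n) {e} (he : e ∈ (cycleGraph n).incidenceSet x) :
      ∃ i ∈ ({x - 1, x} : Set (Fin n)), s(i, i + 1) = e := by
    rwa [incidenceSet_cycleGraph hn2] at he
  refine ⟨⟨?_, ?_, ?_⟩, fun x _ ↦ ?_⟩
  · intro e he
    obtain ⟨i, rfl⟩ := edgeSet_cycleGraph hn2 ▸ he
    rw [hφ, ← hrange]
    exact ⟨i, rfl⟩
  · rintro e₁ he₁ e₂ he₂ hne ⟨x, hx₁, hx₂⟩
    obtain ⟨i, hi, rfl⟩ := hinc x ⟨he₁, hx₁⟩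
    obtain ⟨j, hj, rfl⟩ := hinc x ⟨he₂, hx₂⟩
    rw [hφ, hφ]
    have := hstep x
    rcases hi with rfl | rfl <;> rcases hj with rfl | rfl <;> first | exact absurd rfl hne | omega
  · intro m hm
    obtain ⟨i, rfl⟩ := hrange ▸ hm
    exact ⟨s(i, i + 1), edgeSet_cycleGraph hn2 ▸ ⟨i, rfl⟩, hφ i⟩
  · rw [incidenceSet_cycleGraph hn2, ← Set.image_comp, Set.image_pair]
    simp only [Function.comp_def, hφ]
    have := hstep x
    exact (Nat.exists_pair_eq_Icc_iff (by omega)).2 this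

theorem exists_isIntervalColoring_cycleGraph_iff (hn : 3 ≤ n) :
    (∃ φ, IsIntervalColoring (cycleGraph n) t φ) ↔
      ∃ c : Fin n → ℕ, Set.range c = Set.Icc 1 t ∧ HasUnitSteps c := by
  refine ⟨fun ⟨φ, hφ⟩ ↦ ⟨fun i ↦ φ s(i, i + 1), ?_, hφ.hasUnitSteps_cycleGraph hn⟩,
    fun ⟨c, hrange, hc⟩ ↦ ⟨_, isIntervalColoring_cycleGraph_extend hn hrange hc⟩⟩
  obtain ⟨⟨hbound, -, hsurj⟩, -⟩ := hφ
  have hedges := edgeSet_cycleGraph (n := n) (by omega)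
  ext m
  constructor
  · rintro ⟨i, rfl⟩
    exact hbound _ (hedges ▸ ⟨i, rfl⟩)
  · intro hm
    obtain ⟨e, he, rfl⟩ := hsurj m hm
    obtain ⟨i, rfl⟩ := hedges ▸ he
    exact ⟨i, rfl⟩

end CycleColoring

namespace HasUnitSteps

open Fin.NatCast

variable {n : ℕ} [NeZero n] {c : Fin n → ℕ}

lemma apply_add_le (hc : HasUnitSteps c) (i : Fin n) (m : ℕ) :
    c (i + m) ≤ c i + m ∧ c i ≤ c (i + m) + m := by
  induction m with
  | zero => simp
  | succ m ih =>
    rw [Nat.cast_succ, ← add_assoc]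
    have := hc (i + m)
    omega

lemma two_mul_le (hc : HasUnitSteps c) (i j : Fin n) : 2 * c j ≤ 2 * c i + n := by
  have hj : i + ((j - i).val : Fin n) = j := by simp
  have hi : j + ((n - (j - i).val : ℕ) : Fin n) = i := by
    have h : ((n - (j - i).val : ℕ) : Fin n) + ((j - i).val : Fin n) = 0 := by
      rw [← Nat.cast_add, Nat.sub_add_cancel (j - i).isLt.le, Fin.natCast_self]
    rw [eq_neg_of_add_eq_zero_left h, ← sub_eq_add_neg, Fin.cast_val_eq_self, sub_sub_cancel]
  have h₁ := (hc.apply_add_le i (j - i).val).1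
  have h₂ := (hc.apply_add_le j (n - (j - i).val)).2
  rw [hj] at h₁
  rw [hi] at h₂
  omega

lemma of_periodic {f : ℕ → ℕ} (hf : ∀ j, f (j + 1) = f j + 1 ∨ f j = f (j + 1) + 1)
    (hper : f n = f 0) : HasUnitSteps fun i : Fin n ↦ f i := by
  intro i
  have : f ↑(i + 1) = f (i + 1) := by
    rw [Fin.val_add, Fin.val_one', Nat.add_mod_mod]
    obtain h | h : i.val + 1 < n ∨ i.val + 1 = n := by omega
    · rw [Nat.mod_eq_of_lt h]
    · rw [h, Nat.mod_self, hper]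
  simp only [this]
  exact hf i

end HasUnitSteps

-- `1, 2, …, t, t - 1, …, 2`, followed by `1, 2, 1, 2, …`
def zigzag (t i : ℕ) : ℕ :=
  if i < t then i + 1 else if i < 2 * t - 2 then 2 * t - 1 - i else 1 + i % 2

lemma zigzag_succ (t i : ℕ) :
    zigzag t (i + 1) = zigzag t i + 1 ∨ zigzag t i = zigzag t (i + 1) + 1 := by
  unfold zigzag
  split_ifs <;> omega

lemma zigzag_mem_Icc {t : ℕ} (ht : 2 ≤ t) (i : ℕ) : zigzag t i ∈ Set.Icc 1 t := by
  unfold zigzag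
  split_ifs <;> constructor <;> omega

lemma zigzag_of_lt {t i : ℕ} (h : i < t) : zigzag t i = i + 1 := if_pos h

lemma zigzag_of_even {t n : ℕ} (hn : Even n) (ht : 2 * t ≤ n + 2) : zigzag t n = zigzag t 0 := by
  obtain ⟨r, rfl⟩ := hn
  unfold zigzag
  split_ifs <;> omega

theorem exists_hasUnitSteps_range_eq_Icc_iff {n t : ℕ} [NeZero n] (hn : Even n) :
    (∃ c : Fin n → ℕ, Set.range c = Set.Icc 1 t ∧ HasUnitSteps c) ↔ 2 ≤ t ∧ 2 * t ≤ n + 2 := by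
  constructor
  · rintro ⟨c, hrange, hc⟩
    have hmem (m : ℕ) : m ∈ Set.range c ↔ 1 ≤ m ∧ m ≤ t := by rw [hrange, Set.mem_Icc]
    have h₀ := (hmem (c 0)).1 ⟨0, rfl⟩
    have h₁ := (hmem (c 1)).1 ⟨1, rfl⟩
    have h₀₁ := hc 0
    rw [zero_add] at h₀₁
    obtain ⟨i, hi⟩ := (hmem 1).2 (by omega)
    obtain ⟨j, hj⟩ := (hmem t).2 (by omega)
    have := hc.two_mul_le i j
    omega
  · rintro ⟨ht, htn⟩
    have hn0 := NeZero.ne n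
    refine ⟨fun i ↦ zigzag t i, ?_, .of_periodic (zigzag_succ t) (zigzag_of_even hn htn)⟩
    obtain ⟨r, hr⟩ := hn
    ext m
    refine ⟨fun ⟨i, hi⟩ ↦ hi ▸ zigzag_mem_Icc ht i, fun ⟨hm₁, hm₂⟩ ↦ ⟨⟨m - 1, by omega⟩, ?_⟩⟩
    show zigzag t (m - 1) = m
    rw [zigzag_of_lt (by omega)]
    omega

/-- For any `k ≥ 2`, the even cycle `C_{2k}` admits an interval `t`-coloring iff
`t ∈ [2, k+1]`. -/
theorem stmt10 (k : ℕ) (hk : 2 ≤ k) (t : ℕ) :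
    (∃ φ, IsIntervalColoring (SimpleGraph.cycleGraph (2 * k)) t φ) ↔ t ∈ Set.Icc 2 (k + 1) := by
  have : NeZero (2 * k) := ⟨by omega⟩
  rw [exists_isIntervalColoring_cycleGraph_iff (by omega),
    exists_hasUnitSteps_range_eq_Icc_iff (even_two_mul k), Set.mem_Icc]
  omega
end
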